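/- arXiv:1701.05909 — 3 statements merged into one kernel-verified Lean document; each statement's English description precedes it below -/
import Mathlib

section
/- For every crossing-free matching M of P with m edges, writing s = n − 2m, the weighted sum Σ_{i=0}^{4} (4−i)·v_i(M) is at least 2n − 6s. -/
open scoped Classical

noncomputable section

/-- A point of the plane. -/
abbrev Pt : Type := ℝ × ℝ

/-- The closed straight-line segment with endpoints `a` and `b`. -/
def Seg (a b : Pt) : Set Pt := segment ℝ a b

/-- `P` is in general position: no three points of `P` are collinear and
no two points of `P` have the same `x`-coordinate. -/
def GenPos (P : Finset Pt) : Prop :=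
  (∀ p ∈ P, ∀ q ∈ P, ∀ r ∈ P, p ≠ q → q ≠ r → p ≠ r →
      ¬ Collinear ℝ ({p, q, r} : Set Pt)) ∧
  ∀ p ∈ P, ∀ q ∈ P, p ≠ q → p.1 ≠ q.1

/-- `M` is a crossing-free matching of `P`.  Each edge is recorded as an ordered
pair `(left endpoint, right endpoint)`, the left endpoint being the one of
smaller `x`-coordinate.  No point is an endpoint of more than one edge and no
two distinct edges intersect. -/
structure IsMatching (P : Finset Pt) (M : Finset (Pt × Pt)) : Prop where
  left_mem : ∀ e ∈ M, e.1 ∈ P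
  right_mem : ∀ e ∈ M, e.2 ∈ P
  x_lt : ∀ e ∈ M, e.1.1 < e.2.1
  no_shared : ∀ e ∈ M, ∀ f ∈ M, e ≠ f →
      e.1 ≠ f.1 ∧ e.1 ≠ f.2 ∧ e.2 ≠ f.1 ∧ e.2 ≠ f.2
  no_cross : ∀ e ∈ M, ∀ f ∈ M, e ≠ f → Seg e.1 e.2 ∩ Seg f.1 f.2 = ∅

/-- `p` is isolated in `M`: it is an endpoint of no edge of `M`. -/
def Isolated (M : Finset (Pt × Pt)) (p : Pt) : Prop :=
  ∀ e ∈ M, e.1 ≠ p ∧ e.2 ≠ p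

/-- The `y`-coordinate of the point of the line through the endpoints of `e`
having abscissa `x`. -/
def yOn (e : Pt × Pt) (x : ℝ) : ℝ :=
  e.1.2 + (x - e.1.1) * (e.2.2 - e.1.2) / (e.2.1 - e.1.1)

/-- The point of (the line supporting) the edge `e` with the same
`x`-coordinate as `q`. -/
def vproj (e : Pt × Pt) (q : Pt) : Pt := (q.1, yOn e q.1)

/-- `q` is vertically visible from the interior of the edge `e` of `M`:
its `x`-coordinate lies strictly between the `x`-coordinates of the endpoints
of `e`, and the open vertical segment joining `q` to the point of `e` with the
same `x`-coordinate meets no edge of `M` and contains no point of `P`. -/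
def VertVisible (P : Finset Pt) (M : Finset (Pt × Pt)) (q : Pt) (e : Pt × Pt) : Prop :=
  e.1.1 < q.1 ∧ q.1 < e.2.1 ∧
  (∀ f ∈ M, openSegment ℝ q (vproj e q) ∩ Seg f.1 f.2 = ∅) ∧
  ∀ r ∈ P, r ∉ openSegment ℝ q (vproj e q)

/-- `p` is the left endpoint of some edge of `M`. -/
def IsLeftEndpoint (M : Finset (Pt × Pt)) (p : Pt) : Prop := ∃ e ∈ M, e.1 = p

/-- `p` is the right endpoint of some edge of `M`. -/
def IsRightEndpoint (M : Finset (Pt × Pt)) (p : Pt) : Prop := ∃ e ∈ M, e.2 = p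

/-- The rank `d_M(p)` of `p` in `M`. -/
def rank (P : Finset Pt) (M : Finset (Pt × Pt)) (p : Pt) : ℕ :=
  if h : ∃ e ∈ M, e.1 = p then
    (P.filter fun q =>
      (Isolated M q ∨ IsLeftEndpoint M q) ∧ VertVisible P M q h.choose).card
  else if h' : ∃ e ∈ M, e.2 = p then
    (P.filter fun q =>
      (Isolated M q ∨ IsRightEndpoint M q) ∧ VertVisible P M q h'.choose).card
  else 0

/-- The result of inserting the edge `qp` into `M` (oriented left-to-right). -/
def addEdge (M : Finset (Pt × Pt)) (q p : Pt) : Finset (Pt × Pt) :=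
  if q.1 < p.1 then insert (q, p) M else insert (p, q) M

/-- `h_i(p,M)`: the number of points `q ∈ P` such that `M ∪ {qp}` is a
crossing-free matching of `P` in which `p` has rank `i`. -/
def hcount (P : Finset Pt) (M : Finset (Pt × Pt)) (p : Pt) (i : ℕ) : ℕ :=
  (P.filter fun q =>
    IsMatching P (addEdge M q p) ∧ rank P (addEdge M q p) p = i).card

/-- `l_i(p,M)`: the number of points `q ∈ P` to the left of `p` such that
`M ∪ {qp}` is a crossing-free matching of `P` in which `p` has rank `i`. -/
def lcount (P : Finset Pt) (M : Finset (Pt × Pt)) (p : Pt) (i : ℕ) : ℕ :=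
  (P.filter fun q => q.1 < p.1 ∧ IsMatching P (insert (q, p) M) ∧
    rank P (insert (q, p) M) p = i).card

/-- `v_i(M)`: the number of points of `P` of rank `i` in `M`. -/
def vcount (P : Finset Pt) (M : Finset (Pt × Pt)) (i : ℕ) : ℕ :=
  (P.filter fun p => rank P M p = i).card

/-- The (finite) collection of crossing-free matchings of `P` with `m` edges. -/
def Matchings (P : Finset Pt) (m : ℕ) : Finset (Finset (Pt × Pt)) :=
  (P ×ˢ P).powerset.filter fun M => IsMatching P M ∧ M.card = m

/-- `Ma_m(P)`: the number of crossing-free matchings of `P` with `m` edges. -/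
def Ma (P : Finset Pt) (m : ℕ) : ℕ := (Matchings P m).card

/-- `S_k(m)`: the sum of `Σ_{i=0}^{k} (k-i) h_i(p,M')` over all pairs `(p, M')`
with `M'` a crossing-free matching of `P` with `m-1` edges and `p ∈ P`
isolated in `M'`. -/
def Ssum (P : Finset Pt) (k m : ℕ) : ℕ :=
  ∑ M ∈ Matchings P (m - 1), ∑ p ∈ P.filter (fun p => Isolated M p),
    ∑ i ∈ Finset.range (k + 1), (k - i) * hcount P M p i

/-- The union of the edges of `M`, as a subset of the plane. -/
def edgesSet (M : Finset (Pt × Pt)) : Set Pt := ⋃ e ∈ M, Seg e.1 e.2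

/-- The vertical wall of `r`: the maximal open vertical segment through `r`
meeting no edge of `M` except possibly at `r` itself. -/
def Wall (M : Finset (Pt × Pt)) (r : Pt) : Set Pt :=
  {x : Pt | x.1 = r.1 ∧
    ∀ z : Pt, z.1 = r.1 → z.2 ∈ Set.uIcc x.2 r.2 → z ≠ r → z ∉ edgesSet M}

/-- The complement of the union of all edges of `M` and all vertical walls of
points of `P`; its connected components are the cells of the vertical
decomposition. -/
def FreeRegion (P : Finset Pt) (M : Finset (Pt × Pt)) : Set Pt :=
  (edgesSet M ∪ ⋃ r ∈ P, Wall M r)ᶜ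

/-- `T` is a cell of the vertical decomposition of `M`. -/
def IsCell (P : Finset Pt) (M : Finset (Pt × Pt)) (T : Set Pt) : Prop :=
  ∃ x ∈ FreeRegion P M, T = connectedComponentIn (FreeRegion P M) x

/-- `T` is the cell containing the points `(x(p) - ε, y(p))` for all
sufficiently small `ε > 0`. -/
def IsLeftCellOf (P : Finset Pt) (M : Finset (Pt × Pt)) (p : Pt) (T : Set Pt) : Prop :=
  IsCell P M T ∧ ∃ ε₀ > (0 : ℝ), ∀ ε : ℝ, 0 < ε → ε < ε₀ →
    ((p.1 - ε, p.2) : Pt) ∈ T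

/-- `T` is the cell containing the points `(x(p) + ε, y(p))` for all
sufficiently small `ε > 0`. -/
def IsRightCellOf (P : Finset Pt) (M : Finset (Pt × Pt)) (p : Pt) (T : Set Pt) : Prop :=
  IsCell P M T ∧ ∃ ε₀ > (0 : ℝ), ∀ ε : ℝ, 0 < ε → ε < ε₀ →
    ((p.1 + ε, p.2) : Pt) ∈ T

/-- `q` is the left bifurcation point of `p`: part of the boundary of the cell
to the left of `p` lies on the vertical wall of `q`, and `x(q)` is the infimum
of the abscissas of points of that cell. -/
def IsLeftBifPoint (P : Finset Pt) (M : Finset (Pt × Pt)) (p q : Pt) : Prop :=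
  q ∈ P ∧ ∃ T, IsLeftCellOf P M p T ∧ (frontier T ∩ Wall M q).Nonempty ∧
    IsGLB {x : ℝ | ∃ y : ℝ, ((x, y) : Pt) ∈ T} q.1

/-- `q` is the right bifurcation point of `p`. -/
def IsRightBifPoint (P : Finset Pt) (M : Finset (Pt × Pt)) (p q : Pt) : Prop :=
  q ∈ P ∧ ∃ T, IsRightCellOf P M p T ∧ (frontier T ∩ Wall M q).Nonempty ∧
    IsLUB {x : ℝ | ∃ y : ℝ, ((x, y) : Pt) ∈ T} q.1

/-- The edge `e` of `M` is vertically visible below `p`. -/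
def EdgeVisBelow (P : Finset Pt) (M : Finset (Pt × Pt)) (e : Pt × Pt) (p : Pt) : Prop :=
  e.1.1 < p.1 ∧ p.1 < e.2.1 ∧ yOn e p.1 < p.2 ∧
  (∀ f ∈ M, openSegment ℝ p (vproj e p) ∩ Seg f.1 f.2 = ∅) ∧
  ∀ r ∈ P, r ∉ openSegment ℝ p (vproj e p)

/-- The edge `e` of `M` is vertically visible above `p`. -/
def EdgeVisAbove (P : Finset Pt) (M : Finset (Pt × Pt)) (e : Pt × Pt) (p : Pt) : Prop :=
  e.1.1 < p.1 ∧ p.1 < e.2.1 ∧ p.2 < yOn e p.1 ∧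
  (∀ f ∈ M, openSegment ℝ p (vproj e p) ∩ Seg f.1 f.2 = ∅) ∧
  ∀ r ∈ P, r ∉ openSegment ℝ p (vproj e p)

end


section AuxProofs

open Finset

variable {P : Finset Pt} {M : Finset (Pt × Pt)}

lemma lineMap_pt (a b : Pt) (t : ℝ) :
    AffineMap.lineMap a b t = (((1 - t) * a.1 + t * b.1, (1 - t) * a.2 + t * b.2) : Pt) := by
  rw [AffineMap.lineMap_apply_module]
  simp [Prod.ext_iff, smul_eq_mul]

lemma vert_mem_openSegment1 {c y1 y2 y3 : ℝ} (h1 : y1 < y3) (h2 : y3 < y2) :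
    ((c, y3) : Pt) ∈ openSegment ℝ ((c, y1) : Pt) ((c, y2) : Pt) := by
  rw [openSegment_eq_image_lineMap]
  refine ⟨(y3 - y1) / (y2 - y1), ⟨div_pos (by linarith) (by linarith),
    (div_lt_one (by linarith)).2 (by linarith)⟩, ?_⟩
  rw [lineMap_pt]
  have hd : y2 - y1 ≠ 0 := by linarith
  simp only [Prod.mk.injEq]
  constructor
  · ring
  · field_simp
    ring

lemma vert_mem_openSegment {c y1 y2 y3 : ℝ}
    (h : y1 < y3 ∧ y3 < y2 ∨ y2 < y3 ∧ y3 < y1) :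
    ((c, y3) : Pt) ∈ openSegment ℝ ((c, y1) : Pt) ((c, y2) : Pt) := by
  rcases h with ⟨h1, h2⟩ | ⟨h1, h2⟩
  · exact vert_mem_openSegment1 h1 h2
  · rw [openSegment_symm]
    exact vert_mem_openSegment1 h1 h2

lemma vproj_mem_seg {e : Pt × Pt} {x : ℝ} (h1 : e.1.1 < x) (h2 : x < e.2.1) :
    ((x, yOn e x) : Pt) ∈ Seg e.1 e.2 := by
  rw [Seg, segment_eq_image_lineMap]
  have hd : e.2.1 - e.1.1 ≠ 0 := by linarith
  refine ⟨(x - e.1.1) / (e.2.1 - e.1.1), ⟨div_nonneg (by linarith) (by linarith),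
    (div_le_one (by linarith)).2 (by linarith)⟩, ?_⟩
  rw [lineMap_pt]
  simp only [Prod.mk.injEq, yOn]
  constructor
  · field_simp
    ring
  · field_simp
    ring

lemma yOn_ne (hP : GenPos P) (hM : IsMatching P M) {q : Pt} (hq : q ∈ P)
    {e : Pt × Pt} (he : e ∈ M) (h1 : e.1.1 < q.1) (h2 : q.1 < e.2.1) :
    yOn e q.1 ≠ q.2 := by
  intro hy
  have hseg : ((q.1, yOn e q.1) : Pt) ∈ Seg e.1 e.2 := vproj_mem_seg h1 h2
  rw [Seg, segment_eq_image_lineMap] at hseg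
  obtain ⟨t, -, ht⟩ := hseg
  have hq' : ((q.1, yOn e q.1) : Pt) = q := by rw [hy]
  rw [hq'] at ht
  have hcol : Collinear ℝ ({q, e.1, e.2} : Set Pt) := by
    apply collinear_insert_of_mem_affineSpan_pair
    rw [← ht]
    exact AffineMap.lineMap_mem_affineSpan_pair t e.1 e.2
  exact hP.1 q hq e.1 (hM.left_mem e he) e.2 (hM.right_mem e he)
    (fun h => by rw [h] at h1; exact lt_irrefl _ h1)
    (fun h => by have hx := hM.x_lt e he; rw [h] at hx; exact lt_irrefl _ hx)
    (fun h => by rw [h] at h2; exact lt_irrefl _ h2) hcol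

lemma vis_between (hM : IsMatching P M) {q : Pt} {e f : Pt × Pt}
    (hf : f ∈ M) (hve : VertVisible P M q e) (hvf : VertVisible P M q f)
    (hb : yOn e q.1 < yOn f q.1 ∧ yOn f q.1 < q.2 ∨
          q.2 < yOn f q.1 ∧ yOn f q.1 < yOn e q.1) : False := by
  have hmem : ((q.1, yOn f q.1) : Pt) ∈ openSegment ℝ q (vproj e q) := by
    have h := vert_mem_openSegment (c := q.1) (y1 := q.2) (y2 := yOn e q.1)
      (y3 := yOn f q.1) (Or.symm hb)
    simpa [vproj] using h
  have hseg : ((q.1, yOn f q.1) : Pt) ∈ Seg f.1 f.2 := vproj_mem_seg hvf.1 hvf.2.1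
  have hempty := hve.2.2.1 f hf
  have : ((q.1, yOn f q.1) : Pt) ∈ (∅ : Set Pt) := hempty ▸ Set.mem_inter hmem hseg
  exact this

lemma vis_y_ne (hM : IsMatching P M) {q : Pt} {e f : Pt × Pt}
    (he : e ∈ M) (hf : f ∈ M) (hef : e ≠ f)
    (hve : VertVisible P M q e) (hvf : VertVisible P M q f) :
    yOn e q.1 ≠ yOn f q.1 := by
  intro h
  have h1 : ((q.1, yOn e q.1) : Pt) ∈ Seg e.1 e.2 := vproj_mem_seg hve.1 hve.2.1
  have h2 : ((q.1, yOn e q.1) : Pt) ∈ Seg f.1 f.2 := by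
    rw [h]; exact vproj_mem_seg hvf.1 hvf.2.1
  have hempty := hM.no_cross e he f hf hef
  have : ((q.1, yOn e q.1) : Pt) ∈ (∅ : Set Pt) := hempty ▸ Set.mem_inter h1 h2
  exact this

lemma not_same_side (hM : IsMatching P M) {q : Pt} {e f : Pt × Pt}
    (he : e ∈ M) (hf : f ∈ M) (hef : e ≠ f)
    (hve : VertVisible P M q e) (hvf : VertVisible P M q f)
    (hside : yOn e q.1 < q.2 ∧ yOn f q.1 < q.2 ∨
             q.2 < yOn e q.1 ∧ q.2 < yOn f q.1) : False := by
  have hne := vis_y_ne hM he hf hef hve hvf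
  rcases hside with ⟨ha, hb⟩ | ⟨ha, hb⟩
  · rcases hne.lt_or_gt with h | h
    · exact vis_between hM hf hve hvf (Or.inl ⟨h, hb⟩)
    · exact vis_between hM he hvf hve (Or.inl ⟨h, ha⟩)
  · rcases hne.lt_or_gt with h | h
    · exact vis_between hM he hvf hve (Or.inr ⟨ha, h⟩)
    · exact vis_between hM hf hve hvf (Or.inr ⟨hb, h⟩)

lemma card_vis_le_two (hP : GenPos P) (hM : IsMatching P M) {q : Pt} (hq : q ∈ P) :
    (M.filter fun e => VertVisible P M q e).card ≤ 2 := by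
  by_contra hc
  push_neg at hc
  set s := M.filter fun e => VertVisible P M q e with hs
  obtain ⟨e, he⟩ := Finset.card_pos.mp (show 0 < s.card by omega)
  have hcard : 1 < (s.erase e).card := by
    rw [Finset.card_erase_of_mem he]; omega
  obtain ⟨f, hf⟩ := Finset.card_pos.mp (by omega : 0 < (s.erase e).card)
  obtain ⟨g, hg, hgf⟩ := Finset.exists_mem_ne hcard f
  have hfs := Finset.mem_of_mem_erase hf
  have hfe := Finset.ne_of_mem_erase hf
  have hgs := Finset.mem_of_mem_erase hg
  have hge := Finset.ne_of_mem_erase hg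
  have heM := (Finset.mem_filter.mp he).1
  have hve := (Finset.mem_filter.mp he).2
  have hfM := (Finset.mem_filter.mp hfs).1
  have hvf := (Finset.mem_filter.mp hfs).2
  have hgM := (Finset.mem_filter.mp hgs).1
  have hvg := (Finset.mem_filter.mp hgs).2
  have hne1 : yOn e q.1 ≠ q.2 := yOn_ne hP hM hq heM hve.1 hve.2.1
  have hne2 : yOn f q.1 ≠ q.2 := yOn_ne hP hM hq hfM hvf.1 hvf.2.1
  have hne3 : yOn g q.1 ≠ q.2 := yOn_ne hP hM hq hgM hvg.1 hvg.2.1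
  rcases hne1.lt_or_gt with h1 | h1 <;> rcases hne2.lt_or_gt with h2 | h2 <;>
    rcases hne3.lt_or_gt with h3 | h3
  · exact not_same_side hM heM hfM hfe.symm hve hvf (Or.inl ⟨h1, h2⟩)
  · exact not_same_side hM heM hfM hfe.symm hve hvf (Or.inl ⟨h1, h2⟩)
  · exact not_same_side hM heM hgM hge.symm hve hvg (Or.inl ⟨h1, h3⟩)
  · exact not_same_side hM hfM hgM hgf.symm hvf hvg (Or.inr ⟨h2, h3⟩)
  · exact not_same_side hM hfM hgM hgf.symm hvf hvg (Or.inl ⟨h2, h3⟩)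
  · exact not_same_side hM heM hgM hge.symm hve hvg (Or.inr ⟨h1, h3⟩)
  · exact not_same_side hM heM hfM hfe.symm hve hvf (Or.inr ⟨h1, h2⟩)
  · exact not_same_side hM heM hfM hfe.symm hve hvf (Or.inr ⟨h1, h2⟩)

lemma rank_isolated {p : Pt} (h : Isolated M p) : rank P M p = 0 := by
  have h1 : ¬∃ e ∈ M, e.1 = p := fun ⟨e, he, h'⟩ => (h e he).1 h'
  have h2 : ¬∃ e ∈ M, e.2 = p := fun ⟨e, he, h'⟩ => (h e he).2 h'
  unfold rank
  rw [dif_neg h1, dif_neg h2]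

lemma fst_injOn (hM : IsMatching P M) : ∀ e ∈ M, ∀ f ∈ M, e.1 = f.1 → e = f := by
  intro e he f hf h
  by_contra hne
  exact (hM.no_shared e he f hf hne).1 h

lemma snd_injOn (hM : IsMatching P M) : ∀ e ∈ M, ∀ f ∈ M, e.2 = f.2 → e = f := by
  intro e he f hf h
  by_contra hne
  exact (hM.no_shared e he f hf hne).2.2.2 h

lemma not_left_of_snd (hM : IsMatching P M) {e : Pt × Pt} (he : e ∈ M) :
    ¬∃ f ∈ M, f.1 = e.2 := by
  rintro ⟨f, hf, hf1⟩
  by_cases hfe : f = e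
  · subst hfe
    have hx := hM.x_lt f hf
    rw [hf1] at hx
    exact lt_irrefl _ hx
  · exact (hM.no_shared e he f hf (fun h => hfe h.symm)).2.2.1 hf1.symm

lemma not_right_of_fst (hM : IsMatching P M) {e : Pt × Pt} (he : e ∈ M) :
    ¬∃ f ∈ M, f.2 = e.1 := by
  rintro ⟨f, hf, hf2⟩
  by_cases hfe : f = e
  · subst hfe
    have hx := hM.x_lt f hf
    rw [hf2] at hx
    exact lt_irrefl _ hx
  · exact (hM.no_shared e he f hf (fun h => hfe h.symm)).2.1 hf2.symm

lemma rank_left_eq (hM : IsMatching P M) {e : Pt × Pt} (he : e ∈ M)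
    (hex : ∃ f ∈ M, f.1 = e.1) :
    rank P M e.1 = (P.filter fun q =>
      (Isolated M q ∨ IsLeftEndpoint M q) ∧ VertVisible P M q hex.choose).card := by
  unfold rank
  rw [dif_pos hex]

lemma rank_right_eq (hM : IsMatching P M) {e : Pt × Pt} (he : e ∈ M)
    (hex : ∃ f ∈ M, f.2 = e.2) :
    rank P M e.2 = (P.filter fun q =>
      (Isolated M q ∨ IsRightEndpoint M q) ∧ VertVisible P M q hex.choose).card := by
  unfold rank
  rw [dif_neg (not_left_of_snd hM he), dif_pos hex]

lemma sum_rank_left_le (hP : GenPos P) (hM : IsMatching P M) :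
    ∑ e ∈ M, rank P M e.1 ≤
      2 * (P.filter fun q => Isolated M q ∨ IsLeftEndpoint M q).card := by
  classical
  set g : Pt × Pt → Pt × Pt := fun e =>
    if hex : ∃ f ∈ M, f.1 = e.1 then hex.choose else e with hgdef
  have key : ∀ e ∈ M, g e ∈ M ∧ (g e).1 = e.1 ∧ rank P M e.1 =
      (P.filter fun q =>
        (Isolated M q ∨ IsLeftEndpoint M q) ∧ VertVisible P M q (g e)).card := by
    intro e he
    have hex : ∃ f ∈ M, f.1 = e.1 := ⟨e, he, rfl⟩
    have hg : g e = hex.choose := dif_pos hex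
    refine ⟨?_, ?_, ?_⟩
    · rw [hg]; exact hex.choose_spec.1
    · rw [hg]; exact hex.choose_spec.2
    · rw [hg]; exact rank_left_eq hM he hex
  calc ∑ e ∈ M, rank P M e.1
      = ∑ e ∈ M, ∑ q ∈ P, (if (Isolated M q ∨ IsLeftEndpoint M q) ∧
          VertVisible P M q (g e) then 1 else 0) := by
        refine Finset.sum_congr rfl fun e he => ?_
        rw [(key e he).2.2, Finset.card_filter]
    _ = ∑ q ∈ P, ∑ e ∈ M, (if (Isolated M q ∨ IsLeftEndpoint M q) ∧
          VertVisible P M q (g e) then 1 else 0) := Finset.sum_comm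
    _ ≤ ∑ q ∈ P, (if Isolated M q ∨ IsLeftEndpoint M q then 2 else 0) := by
        refine Finset.sum_le_sum fun q hq => ?_
        by_cases hpred : Isolated M q ∨ IsLeftEndpoint M q
        · rw [if_pos hpred]
          calc ∑ e ∈ M, (if (Isolated M q ∨ IsLeftEndpoint M q) ∧
                VertVisible P M q (g e) then 1 else 0)
              = (M.filter fun e => (Isolated M q ∨ IsLeftEndpoint M q) ∧
                  VertVisible P M q (g e)).card := (Finset.card_filter _ _).symm
            _ ≤ (M.filter fun e => VertVisible P M q e).card := by
                apply Finset.card_le_card_of_injOn g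
                · intro e he'
                  simp only [Finset.coe_filter, Set.mem_setOf_eq] at he' ⊢
                  exact ⟨(key e he'.1).1, he'.2.2⟩
                · intro a ha b hb hab
                  simp only [Finset.coe_filter, Set.mem_setOf_eq] at ha hb
                  have h1 := (key a ha.1).2.1
                  have h2 := (key b hb.1).2.1
                  refine fst_injOn hM a ha.1 b hb.1 ?_
                  rw [← h1, ← h2, hab]
            _ ≤ 2 := card_vis_le_two hP hM hq
        · rw [if_neg hpred]
          exact le_of_eq (Finset.sum_eq_zero fun e he =>
            if_neg fun hcon => hpred hcon.1)
    _ = 2 * (P.filter fun q => Isolated M q ∨ IsLeftEndpoint M q).card := by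
        rw [← Finset.sum_filter, Finset.sum_const, smul_eq_mul, mul_comm]

lemma sum_rank_right_le (hP : GenPos P) (hM : IsMatching P M) :
    ∑ e ∈ M, rank P M e.2 ≤
      2 * (P.filter fun q => Isolated M q ∨ IsRightEndpoint M q).card := by
  classical
  set g : Pt × Pt → Pt × Pt := fun e =>
    if hex : ∃ f ∈ M, f.2 = e.2 then hex.choose else e with hgdef
  have key : ∀ e ∈ M, g e ∈ M ∧ (g e).2 = e.2 ∧ rank P M e.2 =
      (P.filter fun q =>
        (Isolated M q ∨ IsRightEndpoint M q) ∧ VertVisible P M q (g e)).card := by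
    intro e he
    have hex : ∃ f ∈ M, f.2 = e.2 := ⟨e, he, rfl⟩
    have hg : g e = hex.choose := dif_pos hex
    refine ⟨?_, ?_, ?_⟩
    · rw [hg]; exact hex.choose_spec.1
    · rw [hg]; exact hex.choose_spec.2
    · rw [hg]; exact rank_right_eq hM he hex
  calc ∑ e ∈ M, rank P M e.2
      = ∑ e ∈ M, ∑ q ∈ P, (if (Isolated M q ∨ IsRightEndpoint M q) ∧
          VertVisible P M q (g e) then 1 else 0) := by
        refine Finset.sum_congr rfl fun e he => ?_
        rw [(key e he).2.2, Finset.card_filter]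
    _ = ∑ q ∈ P, ∑ e ∈ M, (if (Isolated M q ∨ IsRightEndpoint M q) ∧
          VertVisible P M q (g e) then 1 else 0) := Finset.sum_comm
    _ ≤ ∑ q ∈ P, (if Isolated M q ∨ IsRightEndpoint M q then 2 else 0) := by
        refine Finset.sum_le_sum fun q hq => ?_
        by_cases hpred : Isolated M q ∨ IsRightEndpoint M q
        · rw [if_pos hpred]
          calc ∑ e ∈ M, (if (Isolated M q ∨ IsRightEndpoint M q) ∧
                VertVisible P M q (g e) then 1 else 0)
              = (M.filter fun e => (Isolated M q ∨ IsRightEndpoint M q) ∧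
                  VertVisible P M q (g e)).card := (Finset.card_filter _ _).symm
            _ ≤ (M.filter fun e => VertVisible P M q e).card := by
                apply Finset.card_le_card_of_injOn g
                · intro e he'
                  simp only [Finset.coe_filter, Set.mem_setOf_eq] at he' ⊢
                  exact ⟨(key e he'.1).1, he'.2.2⟩
                · intro a ha b hb hab
                  simp only [Finset.coe_filter, Set.mem_setOf_eq] at ha hb
                  have h1 := (key a ha.1).2.1
                  have h2 := (key b hb.1).2.1
                  refine snd_injOn hM a ha.1 b hb.1 ?_
                  rw [← h1, ← h2, hab]
            _ ≤ 2 := card_vis_le_two hP hM hq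
        · rw [if_neg hpred]
          exact le_of_eq (Finset.sum_eq_zero fun e he =>
            if_neg fun hcon => hpred hcon.1)
    _ = 2 * (P.filter fun q => Isolated M q ∨ IsRightEndpoint M q).card := by
        rw [← Finset.sum_filter, Finset.sum_const, smul_eq_mul, mul_comm]

lemma card_predL_le (hM : IsMatching P M) :
    (P.filter fun q => Isolated M q ∨ IsLeftEndpoint M q).card + M.card ≤ P.card := by
  classical
  have him : M.image Prod.snd ⊆ P := by
    intro x hx
    obtain ⟨e, he, rfl⟩ := Finset.mem_image.mp hx
    exact hM.right_mem e he
  have hcard : (M.image Prod.snd).card = M.card :=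
    Finset.card_image_of_injOn (fun a ha b hb h => snd_injOn hM a ha b hb h)
  have hdisj : Disjoint (P.filter fun q => Isolated M q ∨ IsLeftEndpoint M q)
      (M.image Prod.snd) := by
    rw [Finset.disjoint_right]
    intro x hx hx'
    obtain ⟨e, he, rfl⟩ := Finset.mem_image.mp hx
    rcases (Finset.mem_filter.mp hx').2 with hiso | ⟨f, hf, hf1⟩
    · exact (hiso e he).2 rfl
    · exact not_left_of_snd hM he ⟨f, hf, hf1⟩
  calc (P.filter fun q => Isolated M q ∨ IsLeftEndpoint M q).card + M.card
      = ((P.filter fun q => Isolated M q ∨ IsLeftEndpoint M q) ∪ M.image Prod.snd).card := by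
        rw [Finset.card_union_of_disjoint hdisj, hcard]
    _ ≤ P.card := Finset.card_le_card (Finset.union_subset (Finset.filter_subset _ _) him)

lemma card_predR_le (hM : IsMatching P M) :
    (P.filter fun q => Isolated M q ∨ IsRightEndpoint M q).card + M.card ≤ P.card := by
  classical
  have him : M.image Prod.fst ⊆ P := by
    intro x hx
    obtain ⟨e, he, rfl⟩ := Finset.mem_image.mp hx
    exact hM.left_mem e he
  have hcard : (M.image Prod.fst).card = M.card :=
    Finset.card_image_of_injOn (fun a ha b hb h => fst_injOn hM a ha b hb h)
  have hdisj : Disjoint (P.filter fun q => Isolated M q ∨ IsRightEndpoint M q)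
      (M.image Prod.fst) := by
    rw [Finset.disjoint_right]
    intro x hx hx'
    obtain ⟨e, he, rfl⟩ := Finset.mem_image.mp hx
    rcases (Finset.mem_filter.mp hx').2 with hiso | ⟨f, hf, hf1⟩
    · exact (hiso e he).1 rfl
    · exact not_right_of_fst hM he ⟨f, hf, hf1⟩
  calc (P.filter fun q => Isolated M q ∨ IsRightEndpoint M q).card + M.card
      = ((P.filter fun q => Isolated M q ∨ IsRightEndpoint M q) ∪ M.image Prod.fst).card := by
        rw [Finset.card_union_of_disjoint hdisj, hcard]
    _ ≤ P.card := Finset.card_le_card (Finset.union_subset (Finset.filter_subset _ _) him)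

lemma sum_rank_split (hM : IsMatching P M) :
    ∑ p ∈ P, rank P M p = ∑ e ∈ M, rank P M e.1 + ∑ e ∈ M, rank P M e.2 := by
  classical
  have hsub : M.image Prod.fst ∪ M.image Prod.snd ⊆ P := by
    intro x hx
    rcases Finset.mem_union.mp hx with h | h
    · obtain ⟨e, he, rfl⟩ := Finset.mem_image.mp h
      exact hM.left_mem e he
    · obtain ⟨e, he, rfl⟩ := Finset.mem_image.mp h
      exact hM.right_mem e he
  have hdisj : Disjoint (M.image Prod.fst) (M.image Prod.snd) := by
    rw [Finset.disjoint_right]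
    intro x hx hx'
    obtain ⟨e, he, rfl⟩ := Finset.mem_image.mp hx
    obtain ⟨f, hf, hf1⟩ := Finset.mem_image.mp hx'
    exact not_left_of_snd hM he ⟨f, hf, hf1⟩
  have h1 : ∑ p ∈ P, rank P M p
      = ∑ p ∈ M.image Prod.fst ∪ M.image Prod.snd, rank P M p := by
    refine (Finset.sum_subset hsub fun x hx hnx => ?_).symm
    refine rank_isolated fun e he => ⟨?_, ?_⟩
    · intro h
      exact hnx (Finset.mem_union_left _ (Finset.mem_image.mpr ⟨e, he, h⟩))
    · intro h
      exact hnx (Finset.mem_union_right _ (Finset.mem_image.mpr ⟨e, he, h⟩))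
  rw [h1, Finset.sum_union hdisj,
    Finset.sum_image (fun a ha b hb h => fst_injOn hM a ha b hb h),
    Finset.sum_image (fun a ha b hb h => snd_injOn hM a ha b hb h)]

lemma two_card_le (hM : IsMatching P M) : 2 * M.card ≤ P.card := by
  classical
  have him : M.image Prod.fst ∪ M.image Prod.snd ⊆ P := by
    intro x hx
    rcases Finset.mem_union.mp hx with h | h
    · obtain ⟨e, he, rfl⟩ := Finset.mem_image.mp h
      exact hM.left_mem e he
    · obtain ⟨e, he, rfl⟩ := Finset.mem_image.mp h
      exact hM.right_mem e he
  have hdisj : Disjoint (M.image Prod.fst) (M.image Prod.snd) := by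
    rw [Finset.disjoint_right]
    intro x hx hx'
    obtain ⟨e, he, rfl⟩ := Finset.mem_image.mp hx
    obtain ⟨f, hf, hf1⟩ := Finset.mem_image.mp hx'
    exact not_left_of_snd hM he ⟨f, hf, hf1⟩
  have h1 : (M.image Prod.fst).card = M.card :=
    Finset.card_image_of_injOn (fun a ha b hb h => fst_injOn hM a ha b hb h)
  have h2 : (M.image Prod.snd).card = M.card :=
    Finset.card_image_of_injOn (fun a ha b hb h => snd_injOn hM a ha b hb h)
  calc 2 * M.card = (M.image Prod.fst ∪ M.image Prod.snd).card := by
        rw [Finset.card_union_of_disjoint hdisj, h1, h2]; ring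
    _ ≤ P.card := Finset.card_le_card him

lemma sum_rank_le (hP : GenPos P) (hM : IsMatching P M) :
    ∑ p ∈ P, rank P M p + 4 * M.card ≤ 4 * P.card := by
  have h1 := sum_rank_left_le hP hM
  have h2 := sum_rank_right_le hP hM
  have h3 := card_predL_le hM
  have h4 := card_predR_le hM
  have h5 := sum_rank_split hM
  omega

end AuxProofs

/-- For every crossing-free matching `M` of `P` with `m`
edges, writing `s = n − 2m`, one has `Σ_{i=0}^{4} (4−i)·v_i(M) ≥ 2n − 6s`. -/
theorem weighted_vcount_four_ge (P : Finset Pt) (hP : GenPos P)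
    (M : Finset (Pt × Pt)) (hM : IsMatching P M) (m : ℕ) (hm : M.card = m) :
    2 * (P.card : ℤ) - 6 * ((P.card : ℤ) - 2 * m) ≤
      ∑ i ∈ Finset.range 5, (4 - (i : ℤ)) * vcount P M i := by
  classical
  have hsumrank : ∑ p ∈ P, rank P M p + 4 * M.card ≤ 4 * P.card := sum_rank_le hP hM
  have h2m : 2 * M.card ≤ P.card := two_card_le hM
  have hv : ∀ i : ℕ, (vcount P M i : ℤ) = ∑ p ∈ P, (if rank P M p = i then (1 : ℤ) else 0) := by
    intro i
    rw [vcount, Finset.card_filter]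
    push_cast
    rfl
  have h1 : ∑ i ∈ Finset.range 5, (4 - (i : ℤ)) * vcount P M i
      = ∑ p ∈ P, ∑ i ∈ Finset.range 5, (if rank P M p = i then (4 - (i : ℤ)) else 0) := by
    rw [← Finset.sum_comm]
    refine Finset.sum_congr rfl fun i _ => ?_
    rw [hv i, Finset.mul_sum]
    refine Finset.sum_congr rfl fun p _ => ?_
    rw [mul_ite, mul_one, mul_zero]
  have hge : ∑ p ∈ P, (4 - (rank P M p : ℤ))
      ≤ ∑ i ∈ Finset.range 5, (4 - (i : ℤ)) * vcount P M i := by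
    rw [h1]
    refine Finset.sum_le_sum fun p hp => ?_
    rw [Finset.sum_ite_eq (Finset.range 5) (rank P M p) (fun i => 4 - (i : ℤ))]
    by_cases h5 : rank P M p ∈ Finset.range 5
    · rw [if_pos h5]
    · rw [if_neg h5]
      have h5' : 5 ≤ rank P M p := by
        rw [Finset.mem_range] at h5
        omega
      have : (5 : ℤ) ≤ (rank P M p : ℤ) := by exact_mod_cast h5'
      linarith
  have hsum : ∑ p ∈ P, (4 - (rank P M p : ℤ))
      = 4 * (P.card : ℤ) - ∑ p ∈ P, (rank P M p : ℤ) := by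
    rw [Finset.sum_sub_distrib, Finset.sum_const, nsmul_eq_mul]
    ring
  have hcast : (∑ p ∈ P, (rank P M p : ℤ)) + 4 * (m : ℤ) ≤ 4 * (P.card : ℤ) := by
    rw [← hm]
    exact_mod_cast hsumrank
  have h2m' : 2 * (m : ℤ) ≤ (P.card : ℤ) := by
    rw [← hm]
    exact_mod_cast h2m
  linarith
end

section
/- For every crossing-free matching M of P with m edges, writing s = n − 2m, the weighted sum Σ_{i=0}^{5} (5−i)·v_i(M) is at least 3n − 7s. -/
open scoped Classical

section Aux

open Finset

/-- The vertical projection onto an edge lies on the segment. -/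
lemma aux_vproj_mem_seg (e : Pt × Pt) (q : Pt) (h1 : e.1.1 < q.1) (h2 : q.1 < e.2.1) :
    vproj e q ∈ Seg e.1 e.2 := by
  have hd : (0:ℝ) < e.2.1 - e.1.1 := by linarith
  set t : ℝ := (q.1 - e.1.1) / (e.2.1 - e.1.1) with ht
  have ht0 : 0 ≤ t := div_nonneg (by linarith) (le_of_lt hd)
  have ht1 : t ≤ 1 := by
    rw [ht, div_le_one hd]; linarith
  rw [Seg, segment_eq_image']
  refine ⟨t, ⟨ht0, ht1⟩, ?_⟩
  have hne : e.2.1 - e.1.1 ≠ 0 := ne_of_gt hd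
  rw [Prod.ext_iff]
  constructor
  · show e.1.1 + t * (e.2.1 - e.1.1) = q.1
    rw [ht]; field_simp; ring
  · show e.1.2 + t * (e.2.2 - e.1.2) = yOn e q.1
    rw [ht, yOn]; field_simp <;> ring

/-- A point with the same abscissa and ordinate strictly between is in the
open segment of a vertical segment. -/
lemma aux_vert_mem_openSegment (x y0 y1 y : ℝ)
    (h : (y0 < y ∧ y < y1) ∨ (y1 < y ∧ y < y0)) :
    ((x, y) : Pt) ∈ openSegment ℝ ((x, y0) : Pt) ((x, y1) : Pt) := by
  have hne : y1 - y0 ≠ 0 := by rcases h with ⟨a, b⟩ | ⟨a, b⟩ <;> intro hc <;> nlinarith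
  set t : ℝ := (y - y0) / (y1 - y0) with ht
  have ht0 : 0 < t := by
    rcases h with ⟨a, b⟩ | ⟨a, b⟩
    · exact div_pos (by linarith) (by linarith)
    · exact div_pos_of_neg_of_neg (by linarith) (by linarith)
  have ht1 : t < 1 := by
    rcases h with ⟨a, b⟩ | ⟨a, b⟩
    · rw [ht, div_lt_one (by linarith)]; linarith
    · rw [ht, div_lt_one_of_neg (by linarith)]; linarith
  rw [openSegment_eq_image']
  refine ⟨t, ⟨ht0, ht1⟩, ?_⟩
  rw [Prod.ext_iff]
  constructor
  · show x + t * (x - x) = x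
    ring
  · show y0 + t * (y1 - y0) = y
    rw [ht]; field_simp; ring

/-- In general position, a point of `P` strictly between the abscissas of an
edge with endpoints in `P` is not on the supporting line. -/
lemma aux_yOn_ne (P : Finset Pt) (hP : GenPos P) (e : Pt × Pt) (q : Pt)
    (hq : q ∈ P) (he1 : e.1 ∈ P) (he2 : e.2 ∈ P)
    (h1 : e.1.1 < q.1) (h2 : q.1 < e.2.1) : yOn e q.1 ≠ q.2 := by
  intro hy
  have hne1 : e.1 ≠ q := fun h => by rw [h] at h1; exact lt_irrefl _ h1
  have hne2 : q ≠ e.2 := fun h => by rw [h] at h2; exact lt_irrefl _ h2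
  have hne12 : e.1 ≠ e.2 := fun h => by rw [h] at h1; linarith
  apply hP.1 e.1 he1 q hq e.2 he2 hne1 hne2 hne12
  have hd : (0:ℝ) < e.2.1 - e.1.1 := by linarith
  have hne : e.2.1 - e.1.1 ≠ 0 := ne_of_gt hd
  rw [collinear_iff_exists_forall_eq_smul_vadd]
  refine ⟨e.1, e.2 - e.1, ?_⟩
  intro p hp
  rcases hp with hp | hp | hp
  · exact ⟨0, by simp [hp]⟩
  · refine ⟨(q.1 - e.1.1) / (e.2.1 - e.1.1), ?_⟩
    rw [hp, Prod.ext_iff]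
    constructor
    · show q.1 = (q.1 - e.1.1) / (e.2.1 - e.1.1) * (e.2.1 - e.1.1) + e.1.1
      field_simp; ring
    · show q.2 = (q.1 - e.1.1) / (e.2.1 - e.1.1) * (e.2.2 - e.1.2) + e.1.2
      rw [← hy, yOn]; field_simp; ring
  · simp only [Set.mem_singleton_iff] at hp
    refine ⟨1, ?_⟩
    rw [hp]
    show e.2 = 1 • (e.2 - e.1) +ᵥ e.1
    simp [vadd_eq_add]

/-- Core clash lemma: `q` cannot be vertically visible from `f` if the
projection onto another edge `e` lies strictly inside the witnessing vertical
segment. -/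
lemma aux_vis_clash (P : Finset Pt) (M : Finset (Pt × Pt)) (q : Pt) (e f : Pt × Pt)
    (heM : e ∈ M) (hve : VertVisible P M q e) (hvf : VertVisible P M q f)
    (hbet : (q.2 < yOn e q.1 ∧ yOn e q.1 < yOn f q.1) ∨
      (yOn f q.1 < yOn e q.1 ∧ yOn e q.1 < q.2)) : False := by
  have hmem : vproj e q ∈ openSegment ℝ q (vproj f q) := by
    have : ((q.1, yOn e q.1) : Pt) ∈ openSegment ℝ ((q.1, q.2) : Pt) ((q.1, yOn f q.1) : Pt) :=
      aux_vert_mem_openSegment q.1 q.2 (yOn f q.1) (yOn e q.1) hbet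
    simpa [vproj] using this
  have hseg : vproj e q ∈ Seg e.1 e.2 := aux_vproj_mem_seg e q hve.1 hve.2.1
  have := hvf.2.2.1 e heM
  have : vproj e q ∈ openSegment ℝ q (vproj f q) ∩ Seg e.1 e.2 := ⟨hmem, hseg⟩
  rw [hvf.2.2.1 e heM] at this
  exact this

/-- Two distinct edges cannot both be vertically visible from `q` on the same
side. -/
lemma aux_vis_same_side (P : Finset Pt) (hP : GenPos P) (M : Finset (Pt × Pt))
    (hM : IsMatching P M) (q : Pt) (hq : q ∈ P) (e f : Pt × Pt)
    (heM : e ∈ M) (hfM : f ∈ M)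
    (hve : VertVisible P M q e) (hvf : VertVisible P M q f)
    (hside : (q.2 < yOn e q.1 ∧ q.2 < yOn f q.1) ∨
      (yOn e q.1 < q.2 ∧ yOn f q.1 < q.2)) : e = f := by
  by_contra hne
  rcases lt_trichotomy (yOn e q.1) (yOn f q.1) with hlt | heq | hgt
  · rcases hside with ⟨a,b⟩|⟨a,b⟩
    · exact aux_vis_clash P M q e f heM hve hvf (Or.inl ⟨a, hlt⟩)
    · exact aux_vis_clash P M q f e hfM hvf hve (Or.inr ⟨hlt, b⟩)
  · have h1 : vproj e q ∈ Seg e.1 e.2 := aux_vproj_mem_seg e q hve.1 hve.2.1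
    have h2 : vproj e q ∈ Seg f.1 f.2 := by
      have : vproj e q = vproj f q := by rw [vproj, vproj, heq]
      rw [this]; exact aux_vproj_mem_seg f q hvf.1 hvf.2.1
    have := hM.no_cross e heM f hfM hne
    have hx : vproj e q ∈ Seg e.1 e.2 ∩ Seg f.1 f.2 := ⟨h1, h2⟩
    rw [this] at hx; exact hx
  · rcases hside with ⟨a,b⟩|⟨a,b⟩
    · exact aux_vis_clash P M q f e hfM hvf hve (Or.inl ⟨b, hgt⟩)
    · exact aux_vis_clash P M q e f heM hve hvf (Or.inr ⟨hgt, a⟩)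

/-- Each point of `P` is vertically visible from at most two edges. -/
lemma aux_vis_card_le_two (P : Finset Pt) (hP : GenPos P) (M : Finset (Pt × Pt))
    (hM : IsMatching P M) (q : Pt) (hq : q ∈ P) :
    (M.filter fun e => VertVisible P M q e).card ≤ 2 := by
  classical
  set S := M.filter fun e => VertVisible P M q e with hS
  have hsub : S ⊆ (S.filter fun e => q.2 < yOn e q.1) ∪
      (S.filter fun e => yOn e q.1 < q.2) := by
    intro e he
    have heM : e ∈ M := (mem_filter.1 he).1
    have hve : VertVisible P M q e := (mem_filter.1 he).2
    have hne : yOn e q.1 ≠ q.2 :=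
      aux_yOn_ne P hP e q hq (hM.left_mem e heM) (hM.right_mem e heM) hve.1 hve.2.1
    rcases lt_or_gt_of_ne hne with h | h
    · exact mem_union_right _ (mem_filter.2 ⟨he, h⟩)
    · exact mem_union_left _ (mem_filter.2 ⟨he, h⟩)
  calc S.card ≤ ((S.filter fun e => q.2 < yOn e q.1) ∪
      (S.filter fun e => yOn e q.1 < q.2)).card := card_le_card hsub
    _ ≤ (S.filter fun e => q.2 < yOn e q.1).card +
        (S.filter fun e => yOn e q.1 < q.2).card := card_union_le _ _
    _ ≤ 1 + 1 := by
        gcongr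
        · apply card_le_one.2
          intro e he f hf
          simp only [mem_filter, hS] at he hf
          exact aux_vis_same_side P hP M hM q hq e f he.1.1 hf.1.1 he.1.2 hf.1.2
            (Or.inl ⟨he.2, hf.2⟩)
        · apply card_le_one.2
          intro e he f hf
          simp only [mem_filter, hS] at he hf
          exact aux_vis_same_side P hP M hM q hq e f he.1.1 hf.1.1 he.1.2 hf.1.2
            (Or.inr ⟨he.2, hf.2⟩)

lemma aux_card_filter_irrel {α : Type*} (s : Finset α) (p : α → Prop)
    (h1 h2 : DecidablePred p) :
    (@Finset.filter α p h1 s).card = (@Finset.filter α p h2 s).card := by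
  have : h1 = h2 := Subsingleton.elim _ _
  rw [this]

lemma aux_not_left_of_right (P : Finset Pt) (M : Finset (Pt × Pt))
    (hM : IsMatching P M) (p : Pt) (h : IsRightEndpoint M p) :
    ¬ ∃ e ∈ M, e.1 = p := by
  rintro ⟨e, heM, he⟩
  obtain ⟨f, hfM, hf⟩ := h
  by_cases hef : e = f
  · subst hef
    have := hM.x_lt e heM
    rw [he, hf] at this
    exact lt_irrefl _ this
  · exact (hM.no_shared e heM f hfM hef).2.1 (he.trans hf.symm)

lemma aux_card_left (P : Finset Pt) (M : Finset (Pt × Pt)) (hM : IsMatching P M) :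
    (P.filter fun p => IsLeftEndpoint M p).card = M.card := by
  have himg : P.filter (fun p => IsLeftEndpoint M p) = M.image Prod.fst := by
    ext p
    rw [mem_filter, mem_image]; simp only [IsLeftEndpoint]
    constructor
    · rintro ⟨-, e, heM, he⟩; exact ⟨e, heM, he⟩
    · rintro ⟨e, heM, he⟩
      exact ⟨he ▸ hM.left_mem e heM, e, heM, he⟩
  rw [himg]
  apply card_image_of_injOn
  intro e heM f hfM hef
  by_contra hne
  exact (hM.no_shared e heM f hfM hne).1 hef

lemma aux_card_right (P : Finset Pt) (M : Finset (Pt × Pt)) (hM : IsMatching P M) :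
    (P.filter fun p => IsRightEndpoint M p).card = M.card := by
  have himg : P.filter (fun p => IsRightEndpoint M p) = M.image Prod.snd := by
    ext p
    rw [mem_filter, mem_image]; simp only [IsRightEndpoint]
    constructor
    · rintro ⟨-, e, heM, he⟩; exact ⟨e, heM, he⟩
    · rintro ⟨e, heM, he⟩
      exact ⟨he ▸ hM.right_mem e heM, e, heM, he⟩
  rw [himg]
  apply card_image_of_injOn
  intro e heM f hfM hef
  by_contra hne
  exact (hM.no_shared e heM f hfM hne).2.2.2 hef

lemma aux_rank_isolated (P : Finset Pt) (M : Finset (Pt × Pt)) (p : Pt)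
    (h : Isolated M p) : rank P M p = 0 := by
  rw [rank, dif_neg, dif_neg]
  · rintro ⟨e, heM, he⟩; exact (h e heM).2 he
  · rintro ⟨e, heM, he⟩; exact (h e heM).1 he

end Aux

/-- For every crossing-free matching `M` of `P` with `m`
edges, writing `s = n − 2m`, one has `Σ_{i=0}^{5} (5−i)·v_i(M) ≥ 3n − 7s`. -/
theorem weighted_vcount_five_ge (P : Finset Pt) (hP : GenPos P)
    (M : Finset (Pt × Pt)) (hM : IsMatching P M) (m : ℕ) (hm : M.card = m) :
    3 * (P.card : ℤ) - 7 * ((P.card : ℤ) - 2 * m) ≤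
      ∑ i ∈ Finset.range 6, (5 - (i : ℤ)) * vcount P M i := by
  classical
  open Finset in
  subst hm
  set Pl := P.filter (fun p => IsLeftEndpoint M p) with hPldef
  set Pr := P.filter (fun p => IsRightEndpoint M p) with hPrdef
  set Pi := P.filter (fun p => Isolated M p) with hPidef
  have hcardl : Pl.card = M.card := aux_card_left P M hM
  have hcardr : Pr.card = M.card := aux_card_right P M hM
  -- Pl, Pr, Pi partition P
  have hdisjlr : Disjoint Pl Pr := by
    rw [Finset.disjoint_left]
    intro p hp hp'
    exact aux_not_left_of_right P M hM p (Finset.mem_filter.1 hp').2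
      (Finset.mem_filter.1 hp).2
  have hdisji : Disjoint (Pl ∪ Pr) Pi := by
    rw [Finset.disjoint_left]
    intro p hp hp'
    have hiso : Isolated M p := (Finset.mem_filter.1 hp').2
    rcases Finset.mem_union.1 hp with h | h
    · obtain ⟨e, heM, he⟩ := (Finset.mem_filter.1 h).2
      exact (hiso e heM).1 he
    · obtain ⟨e, heM, he⟩ := (Finset.mem_filter.1 h).2
      exact (hiso e heM).2 he
  have hunion : Pl ∪ Pr ∪ Pi = P := by
    apply Finset.Subset.antisymm
    · intro p hp
      rcases Finset.mem_union.1 hp with h | h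
      · rcases Finset.mem_union.1 h with h | h
        · exact (Finset.mem_filter.1 h).1
        · exact (Finset.mem_filter.1 h).1
      · exact (Finset.mem_filter.1 h).1
    · intro p hp
      by_cases hl : IsLeftEndpoint M p
      · exact Finset.mem_union_left _ (Finset.mem_union_left _
          (Finset.mem_filter.2 ⟨hp, hl⟩))
      by_cases hr : IsRightEndpoint M p
      · exact Finset.mem_union_left _ (Finset.mem_union_right _
          (Finset.mem_filter.2 ⟨hp, hr⟩))
      · refine Finset.mem_union_right _ (Finset.mem_filter.2 ⟨hp, ?_⟩)
        intro e heM
        constructor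
        · intro he; exact hl ⟨e, heM, he⟩
        · intro he; exact hr ⟨e, heM, he⟩
  have hcardP : Pl.card + Pr.card + Pi.card = P.card := by
    rw [← hunion, Finset.card_union_of_disjoint hdisji,
      Finset.card_union_of_disjoint hdisjlr]
  -- left-edge and right-edge selectors
  set C : Pt → Prop := fun q => Isolated M q ∨ IsLeftEndpoint M q with hC
  set C' : Pt → Prop := fun q => Isolated M q ∨ IsRightEndpoint M q with hC'
  set E : Pt → Pt × Pt := fun p =>
    if h : ∃ e ∈ M, e.1 = p then h.choose else (p, p) with hE
  set E' : Pt → Pt × Pt := fun p =>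
    if h : ∃ e ∈ M, e.2 = p then h.choose else (p, p) with hE'
  have hEmem : ∀ p ∈ Pl, E p ∈ M ∧ (E p).1 = p := by
    intro p hp
    have h : ∃ e ∈ M, e.1 = p := (Finset.mem_filter.1 hp).2
    rw [hE]; simp only [dif_pos h]
    exact h.choose_spec
  have hE'mem : ∀ p ∈ Pr, E' p ∈ M ∧ (E' p).2 = p := by
    intro p hp
    have h : ∃ e ∈ M, e.2 = p := (Finset.mem_filter.1 hp).2
    rw [hE']; simp only [dif_pos h]
    exact h.choose_spec
  have hrankl : ∀ p ∈ Pl, rank P M p =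
      (P.filter fun q => C q ∧ VertVisible P M q (E p)).card := by
    intro p hp
    have h : ∃ e ∈ M, e.1 = p := (Finset.mem_filter.1 hp).2
    have hEp : E p = h.choose := by rw [hE]; exact dif_pos h
    rw [rank, dif_pos h, hEp]
  have hrankr : ∀ p ∈ Pr, rank P M p =
      (P.filter fun q => C' q ∧ VertVisible P M q (E' p)).card := by
    intro p hp
    have h : ∃ e ∈ M, e.2 = p := (Finset.mem_filter.1 hp).2
    have hE'p : E' p = h.choose := by rw [hE']; exact dif_pos h
    rw [rank, dif_neg (aux_not_left_of_right P M hM p h), dif_pos h, hE'p]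
  -- bounding the sum of ranks over left endpoints
  have key : ∀ (D : Pt → Prop) (F : Pt → Pt × Pt) (S : Finset Pt),
      (∀ p ∈ S, F p ∈ M ∧ (F p).1 = p ∨ F p ∈ M ∧ (F p).2 = p) →
      (∀ p ∈ S, rank P M p = (P.filter fun q => D q ∧ VertVisible P M q (F p)).card) →
      (∀ p ∈ S, ∀ p' ∈ S, F p = F p' → p = p') →
      ∑ p ∈ S, rank P M p ≤ 2 * (P.filter D).card := by
    intro D F S hF hrk hinj
    calc ∑ p ∈ S, rank P M p
        = ∑ p ∈ S, ((P.filter D).filter fun q => VertVisible P M q (F p)).card := by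
          apply Finset.sum_congr rfl
          intro p hp
          rw [hrk p hp, Finset.filter_filter]
      _ = ∑ p ∈ S, ∑ q ∈ P.filter D, if VertVisible P M q (F p) then 1 else 0 := by
          simp only [Finset.card_filter]
      _ = ∑ q ∈ P.filter D, ∑ p ∈ S, if VertVisible P M q (F p) then 1 else 0 :=
          Finset.sum_comm
      _ = ∑ q ∈ P.filter D, (S.filter fun p => VertVisible P M q (F p)).card := by
          simp only [Finset.card_filter]
      _ ≤ ∑ q ∈ P.filter D, 2 := by
          apply Finset.sum_le_sum
          intro q hq
          have hqP : q ∈ P := (Finset.mem_filter.1 hq).1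
          calc (S.filter fun p => VertVisible P M q (F p)).card
              ≤ (M.filter fun e => VertVisible P M q e).card := by
                apply Finset.card_le_card_of_injOn F
                · intro p hp
                  have hpS := (Finset.mem_filter.1 hp).1
                  rcases hF p hpS with ⟨h1, _⟩ | ⟨h1, _⟩ <;>
                    exact Finset.mem_filter.2 ⟨h1, (Finset.mem_filter.1 hp).2⟩
                · intro p hp p' hp' hpp
                  exact hinj p (Finset.mem_coe.1 hp |> fun h => (Finset.mem_filter.1 h).1)
                    p' (Finset.mem_coe.1 hp' |> fun h => (Finset.mem_filter.1 h).1) hpp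
            _ ≤ 2 := aux_vis_card_le_two P hP M hM q hqP
      _ = 2 * (P.filter D).card := by
          rw [Finset.sum_const, smul_eq_mul, mul_comm]
  have hbl : ∑ p ∈ Pl, rank P M p ≤ 2 * (Pi.card + Pl.card) := by
    have h1 := key C E Pl (fun p hp => Or.inl (hEmem p hp))
      (fun p hp => (hrankl p hp).trans (aux_card_filter_irrel P _ _ _))
      (fun p hp p' hp' hpp => by rw [← (hEmem p hp).2, ← (hEmem p' hp').2, hpp])
    refine le_trans h1 ?_
    refine Nat.mul_le_mul_left 2 ?_
    refine le_trans (Finset.card_le_card (t := Pi ∪ Pl) ?_) (Finset.card_union_le Pi Pl)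
    intro q hq
    simp only [Finset.mem_filter] at hq
    obtain ⟨hqP, hq2⟩ := hq
    rcases hq2 with h | h
    · exact Finset.mem_union_left _ (Finset.mem_filter.2 ⟨hqP, h⟩)
    · exact Finset.mem_union_right _ (Finset.mem_filter.2 ⟨hqP, h⟩)
  have hbr : ∑ p ∈ Pr, rank P M p ≤ 2 * (Pi.card + Pr.card) := by
    have h1 := key C' E' Pr (fun p hp => Or.inr (hE'mem p hp))
      (fun p hp => (hrankr p hp).trans (aux_card_filter_irrel P _ _ _))
      (fun p hp p' hp' hpp => by rw [← (hE'mem p hp).2, ← (hE'mem p' hp').2, hpp])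
    refine le_trans h1 ?_
    refine Nat.mul_le_mul_left 2 ?_
    refine le_trans (Finset.card_le_card (t := Pi ∪ Pr) ?_) (Finset.card_union_le Pi Pr)
    intro q hq
    simp only [Finset.mem_filter] at hq
    obtain ⟨hqP, hq2⟩ := hq
    rcases hq2 with h | h
    · exact Finset.mem_union_left _ (Finset.mem_filter.2 ⟨hqP, h⟩)
    · exact Finset.mem_union_right _ (Finset.mem_filter.2 ⟨hqP, h⟩)
  have hbi : ∑ p ∈ Pi, rank P M p = 0 := by
    apply Finset.sum_eq_zero
    intro p hp
    exact aux_rank_isolated P M p (Finset.mem_filter.1 hp).2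
  have hsplit : ∑ p ∈ P, rank P M p
      = ∑ p ∈ Pl, rank P M p + ∑ p ∈ Pr, rank P M p + ∑ p ∈ Pi, rank P M p := by
    rw [← hunion, Finset.sum_union hdisji, Finset.sum_union hdisjlr]
  have hRsum : ∑ p ∈ P, rank P M p ≤ 2 * (Pi.card + Pl.card) + 2 * (Pi.card + Pr.card) := by
    omega
  -- lower bound on the weighted count
  have hA : (5 : ℤ) * P.card - ∑ p ∈ P, (rank P M p : ℤ) ≤
      ∑ i ∈ Finset.range 6, (5 - (i : ℤ)) * vcount P M i := by
    have hv : ∀ i : ℕ, ((vcount P M i : ℤ)) * (5 - (i : ℤ)) =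
        ∑ p ∈ P, if rank P M p = i then (5 - (i : ℤ)) else 0 := by
      intro i
      rw [vcount, ← Finset.sum_filter]
      simp [mul_comm]
      ring
    calc (5 : ℤ) * P.card - ∑ p ∈ P, (rank P M p : ℤ)
        = ∑ p ∈ P, ((5 : ℤ) - (rank P M p : ℤ)) := by
          rw [Finset.sum_sub_distrib, Finset.sum_const, nsmul_eq_mul, mul_comm]
      _ ≤ ∑ p ∈ P, ∑ i ∈ Finset.range 6, (if rank P M p = i then (5 - (i : ℤ)) else 0) := by
          apply Finset.sum_le_sum
          intro p hp
          rw [Finset.sum_ite_eq]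
          by_cases h : rank P M p ∈ Finset.range 6
          · rw [if_pos h]
          · rw [if_neg h]
            have : 6 ≤ rank P M p := by
              by_contra hc
              exact h (Finset.mem_range.2 (by omega))
            have : (6 : ℤ) ≤ (rank P M p : ℤ) := by exact_mod_cast this
            linarith
      _ = ∑ i ∈ Finset.range 6, ∑ p ∈ P, (if rank P M p = i then (5 - (i : ℤ)) else 0) :=
          Finset.sum_comm
      _ = ∑ i ∈ Finset.range 6, (5 - (i : ℤ)) * vcount P M i := by
          apply Finset.sum_congr rfl
          intro i _
          rw [← hv i, mul_comm]
  -- put everything together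
  have h2m : 2 * M.card + Pi.card = P.card := by omega
  have hRZ : (∑ p ∈ P, (rank P M p : ℤ)) ≤ 4 * (Pi.card : ℤ) + 4 * (M.card : ℤ) := by
    have := hRsum
    have hcast : (∑ p ∈ P, (rank P M p : ℤ)) = ((∑ p ∈ P, rank P M p : ℕ) : ℤ) := by
      push_cast; ring
    rw [hcast]
    have : (∑ p ∈ P, rank P M p) ≤ 4 * Pi.card + 4 * M.card := by omega
    exact_mod_cast this
  have hn : (P.card : ℤ) = 2 * M.card + Pi.card := by exact_mod_cast h2m.symm
  linarith [hA, hRZ, hn, Int.ofNat_nonneg Pi.card]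
end

section
/- For every integer m ≥ 1, writing s = n − 2m, one has S_4(m) ≤ 24·(s + 2)·Ma_{m−1}(P). -/
open scoped Classical

noncomputable section
open Finset

/-- strictly between -/
def Betw (a m b : ℝ) : Prop := (a < m ∧ m < b) ∨ (b < m ∧ m < a)

lemma Betw.symm {a m b : ℝ} (h : Betw a m b) : Betw b m a := h.elim Or.inr Or.inl

lemma Betw.ne₁ {a m b : ℝ} (h : Betw a m b) : m ≠ a := by
  rcases h with ⟨h1, h2⟩ | ⟨h1, h2⟩ <;> intro e <;> subst e <;> linarith

lemma Betw.ne₂ {a m b : ℝ} (h : Betw a m b) : m ≠ b := h.symm.ne₁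

lemma not_betw_self₁ {m b : ℝ} : ¬ Betw m m b := by
  rintro (⟨h1, h2⟩ | ⟨h1, h2⟩) <;> linarith

lemma not_betw_self₂ {a m : ℝ} : ¬ Betw a m m := fun h => not_betw_self₁ h.symm

lemma yOn_left (e : Pt × Pt) : yOn e e.1.1 = e.1.2 := by simp [yOn]

lemma yOn_right (e : Pt × Pt) (h : e.1.1 ≠ e.2.1) : yOn e e.2.1 = e.2.2 := by
  have h' : e.2.1 - e.1.1 ≠ 0 := sub_ne_zero.mpr (Ne.symm h)
  simp only [yOn]; rw [mul_div_right_comm, div_self h']; ring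

lemma yOn_cont (e : Pt × Pt) : Continuous (fun x => yOn e x) := by
  unfold yOn; fun_prop

lemma mem_Seg_iff {a b : Pt} (hab : a.1 < b.1) {z : Pt} :
    z ∈ Seg a b ↔ a.1 ≤ z.1 ∧ z.1 ≤ b.1 ∧ z.2 = yOn (a, b) z.1 := by
  have hne : b.1 - a.1 ≠ 0 := by intro h; linarith [sub_eq_zero.mp h]
  constructor
  · intro hz
    rw [Seg, segment_eq_image] at hz
    obtain ⟨θ, hθ, hz⟩ := hz
    have h1 : z.1 = (1 - θ) * a.1 + θ * b.1 := by
      rw [← hz]; simp [Prod.smul_def, smul_eq_mul]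
    have h2 : z.2 = (1 - θ) * a.2 + θ * b.2 := by
      rw [← hz]; simp [Prod.smul_def, smul_eq_mul]
    obtain ⟨hθ0, hθ1⟩ := hθ
    refine ⟨by nlinarith, by nlinarith, ?_⟩
    have hx : z.1 - a.1 = θ * (b.1 - a.1) := by rw [h1]; ring
    rw [yOn]; rw [hx, h2]
    field_simp
    ring
  · rintro ⟨h1, h2, h3⟩
    rw [Seg, segment_eq_image]
    refine ⟨(z.1 - a.1) / (b.1 - a.1), ⟨div_nonneg (by linarith) (by linarith), ?_⟩, ?_⟩
    · rw [div_le_one (by linarith)]; linarith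
    · have hz : z = (z.1, z.2) := rfl
      rw [hz]
      simp only [Prod.smul_def, smul_eq_mul, Prod.mk_add_mk, Prod.mk.injEq]
      constructor
      · field_simp; ring
      · rw [h3, yOn]; field_simp; ring

lemma seg_y_eq {a b : Pt} (hab : a.1 < b.1) {z : Pt} (hz : z ∈ Seg a b) :
    z.2 = yOn (a, b) z.1 := ((mem_Seg_iff hab).1 hz).2.2

/-- if two edges have disjoint segments, their `yOn` never agree on common columns -/
lemma yOn_ne_of_disjoint {e f : Pt × Pt} (he : e.1.1 < e.2.1) (hf : f.1.1 < f.2.1)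
    (hdisj : Seg e.1 e.2 ∩ Seg f.1 f.2 = ∅) {x : ℝ}
    (h1 : e.1.1 ≤ x) (h2 : x ≤ e.2.1) (h3 : f.1.1 ≤ x) (h4 : x ≤ f.2.1) :
    yOn e x ≠ yOn f x := by
  intro h
  have hz1 : ((x, yOn e x) : Pt) ∈ Seg e.1 e.2 := by
    rw [mem_Seg_iff he]; exact ⟨h1, h2, rfl⟩
  have hz2 : ((x, yOn e x) : Pt) ∈ Seg f.1 f.2 := by
    rw [mem_Seg_iff hf]; exact ⟨h3, h4, h⟩
  have : ((x, yOn e x) : Pt) ∈ Seg e.1 e.2 ∩ Seg f.1 f.2 := ⟨hz1, hz2⟩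
  rw [hdisj] at this; exact this

/-- sign preservation -/
lemma yOn_lt_keep {e f : Pt × Pt} (he : e.1.1 < e.2.1) (hf : f.1.1 < f.2.1)
    (hdisj : Seg e.1 e.2 ∩ Seg f.1 f.2 = ∅) {x₁ x₂ : ℝ}
    (h11 : e.1.1 ≤ x₁) (h12 : x₁ ≤ e.2.1) (h13 : f.1.1 ≤ x₁) (h14 : x₁ ≤ f.2.1)
    (h21 : e.1.1 ≤ x₂) (h22 : x₂ ≤ e.2.1) (h23 : f.1.1 ≤ x₂) (h24 : x₂ ≤ f.2.1)
    (hlt : yOn e x₁ < yOn f x₁) : yOn e x₂ < yOn f x₂ := by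
  rcases lt_trichotomy (yOn e x₂) (yOn f x₂) with h | h | h
  · exact h
  · exact absurd h (yOn_ne_of_disjoint he hf hdisj h21 h22 h23 h24)
  · exfalso
    set g : ℝ → ℝ := fun x => yOn f x - yOn e x with hg
    have hgc : ContinuousOn g (Set.uIcc x₁ x₂) :=
      ((yOn_cont f).sub (yOn_cont e)).continuousOn
    have h0 : (0 : ℝ) ∈ Set.uIcc (g x₁) (g x₂) := by
      rw [Set.mem_uIcc]
      right
      constructor
      · simp only [hg]; linarith
      · simp only [hg]; linarith
    obtain ⟨x, hx, hx0⟩ := intermediate_value_uIcc hgc h0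
    have hx1 : e.1.1 ≤ x ∧ x ≤ e.2.1 ∧ f.1.1 ≤ x ∧ x ≤ f.2.1 := by
      rw [Set.mem_uIcc] at hx
      rcases hx with ⟨hl, hr⟩ | ⟨hl, hr⟩ <;>
        exact ⟨by linarith, by linarith, by linarith, by linarith⟩
    refine yOn_ne_of_disjoint he hf hdisj hx1.1 hx1.2.1 hx1.2.2.1 hx1.2.2.2 ?_
    have : yOn f x - yOn e x = 0 := hx0
    linarith

lemma collinear_of_yOn {a b c : Pt} (hab : a.1 ≠ b.1) (h : c.2 = yOn (a, b) c.1) :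
    Collinear ℝ ({a, b, c} : Set Pt) := by
  have hne : b.1 - a.1 ≠ 0 := sub_ne_zero.mpr (Ne.symm hab)
  have ha : a ∈ ({a, b, c} : Set Pt) := by simp
  rw [collinear_iff_of_mem ha]
  refine ⟨b - a, fun p hp => ?_⟩
  simp only [Set.mem_insert_iff, Set.mem_singleton_iff] at hp
  rcases hp with rfl | rfl | rfl
  · exact ⟨0, by simp⟩
  · exact ⟨1, by simp⟩
  · refine ⟨(p.1 - a.1) / (b.1 - a.1), ?_⟩
    have hp2 : p.2 = a.2 + (p.1 - a.1) * (b.2 - a.2) / (b.1 - a.1) := h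
    have : p = (p.1, p.2) := rfl
    rw [this, hp2]
    have hvadd : ∀ (t : ℝ) (v w : Pt), t • v +ᵥ w = (t * v.1 + w.1, t * v.2 + w.2) := by
      intro t v w; rfl
    rw [hvadd]
    simp only [Prod.fst_sub, Prod.snd_sub, Prod.mk.injEq]
    constructor
    · field_simp; ring
    · field_simp; ring

lemma mem_openSegment_vert {x a b : ℝ} (hab : a ≠ b) {z : Pt} :
    z ∈ openSegment ℝ ((x, a) : Pt) ((x, b) : Pt) ↔ z.1 = x ∧ Betw a z.2 b := by
  rw [openSegment_eq_image]
  constructor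
  · rintro ⟨θ, hθ, hz⟩
    simp only [Set.mem_Ioo] at hθ
    obtain ⟨hθ0, hθ1⟩ := hθ
    have h1 : z.1 = x := by rw [← hz]; simp [Prod.smul_def, smul_eq_mul]; ring
    have h2 : z.2 = (1 - θ) * a + θ * b := by rw [← hz]; simp [Prod.smul_def, smul_eq_mul]
    refine ⟨h1, ?_⟩
    rcases lt_or_gt_of_ne hab with h | h
    · exact Or.inl ⟨by nlinarith, by nlinarith⟩
    · exact Or.inr ⟨by nlinarith, by nlinarith⟩
  · rintro ⟨h1, h2⟩
    refine ⟨(z.2 - a) / (b - a), ?_, ?_⟩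
    · simp only [Set.mem_Ioo]
      constructor
      · rcases h2 with ⟨ha, hb⟩ | ⟨ha, hb⟩
        · apply div_pos <;> linarith
        · rw [div_pos_iff]; right; constructor <;> linarith
      · rcases h2 with ⟨ha, hb⟩ | ⟨ha, hb⟩
        · rw [div_lt_one (by linarith)]; linarith
        · rw [div_lt_one_iff]; right; right; constructor <;> linarith
    · have hz : z = (z.1, z.2) := rfl
      have hne : b - a ≠ 0 := sub_ne_zero.mpr (Ne.symm hab)
      rw [hz, h1]
      simp only [Prod.smul_def, smul_eq_mul, Prod.mk_add_mk, Prod.mk.injEq]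
      constructor
      · ring
      · field_simp; ring

end
noncomputable section
lemma not_betw_refl {a m : ℝ} : ¬ Betw a m a := by
  rintro (⟨h1, h2⟩ | ⟨h1, h2⟩) <;> linarith
end
noncomputable section
open Finset

/-- Abstract configuration for the one-sided charging argument. -/
structure Config where
  A : Finset Pt
  E : Finset (Pt × Pt)
  pp : Pt
  hE1 : ∀ e ∈ E, e.1.1 < e.2.1
  hEA : ∀ e ∈ E, e.1 ∈ A ∧ e.2 ∈ A
  hppA : pp ∈ A
  hxinj : ∀ a ∈ A, ∀ b ∈ A, a.1 = b.1 → a = b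
  hcol : ∀ a ∈ A, ∀ b ∈ A, ∀ c ∈ A, a ≠ b → b ≠ c → a ≠ c →
      ¬ Collinear ℝ ({a, b, c} : Set Pt)
  hshare : ∀ e ∈ E, ∀ f ∈ E, e ≠ f → e.1 ≠ f.1 ∧ e.1 ≠ f.2 ∧ e.2 ≠ f.1 ∧ e.2 ≠ f.2
  hppiso : ∀ e ∈ E, e.1 ≠ pp ∧ e.2 ≠ pp

namespace Config

variable (c : Config)

/-- `q` is a potential left partner of `pp`. -/
def Pa (q : Pt) : Prop :=
  q ∈ c.A ∧ q.1 < c.pp.1 ∧ (∀ f ∈ c.E, Seg q c.pp ∩ Seg f.1 f.2 = ∅) ∧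
    ∀ f ∈ c.E, f.1 ≠ q ∧ f.2 ≠ q

/-- `r` is isolated or a right endpoint. -/
def good (r : Pt) : Prop :=
  (∀ f ∈ c.E, f.1 ≠ r ∧ f.2 ≠ r) ∨ ∃ f ∈ c.E, f.2 = r

/-- the wall of `r` is pierced by the segment from `q` to `pp`. -/
def pier (q r : Pt) : Prop :=
  q.1 < r.1 ∧ r.1 < c.pp.1 ∧
    ∀ f ∈ c.E, f.1.1 ≤ r.1 → r.1 ≤ f.2.1 → ¬ Betw r.2 (yOn f r.1) (yOn (q, c.pp) r.1)

/-- number of good points pierced by `q pp` with abscissa `< x` -/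
def cB (x : ℝ) (q : Pt) : ℕ :=
  (c.A.filter (fun r => c.good r ∧ c.pier q r ∧ r.1 < x)).card

/-- no edge separates two partner segments at abscissa `x`. -/
def CoGap (S : Finset Pt) (x : ℝ) : Prop :=
  ∀ q ∈ S, ∀ q' ∈ S, ∀ f ∈ c.E, f.1.1 < x → x < f.2.1 →
    ¬ Betw (yOn (q, c.pp) x) (yOn f x) (yOn (q', c.pp) x)

/-- the weight function of the charging tree -/
def V : ℕ → ℕ
  | 0 => 0
  | 1 => 1
  | 2 => 3
  | 3 => 6
  | _ => 12

lemma V_double {w : ℕ} (h : w ≤ 3) : 2 * V w ≤ V (w + 1) := by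
  interval_cases w <;> simp [V]

lemma V_pay {w : ℕ} (h : w ≤ 3) : (w + 1) + V w ≤ V (w + 1) := by
  interval_cases w <;> simp [V]

lemma V_mono {w : ℕ} (h : w ≤ 3) : V w ≤ V (w + 1) := by
  interval_cases w <;> simp [V]

variable {c}

lemma Pa.disj' {q : Pt} (hq : c.Pa q) {f : Pt × Pt} (hf : f ∈ c.E) :
    Seg f.1 f.2 ∩ Seg (q, c.pp).1 (q, c.pp).2 = ∅ := by
  rw [Set.inter_comm]; exact hq.2.2.1 f hf

/-- `yOn` of an edge and of a partner segment never agree on common columns -/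
lemma yne {q : Pt} (hq : c.Pa q) {f : Pt × Pt} (hf : f ∈ c.E) {x : ℝ}
    (h1 : f.1.1 ≤ x) (h2 : x ≤ f.2.1) (h3 : q.1 ≤ x) (h4 : x ≤ c.pp.1) :
    yOn f x ≠ yOn (q, c.pp) x :=
  yOn_ne_of_disjoint (c.hE1 f hf) hq.2.1 (hq.disj' hf) h1 h2 h3 h4

/-- transport of strict inequalities along columns -/
lemma lt_keep {q : Pt} (hq : c.Pa q) {f : Pt × Pt} (hf : f ∈ c.E) {x₁ x₂ : ℝ}
    (h11 : f.1.1 ≤ x₁) (h12 : x₁ ≤ f.2.1) (h13 : q.1 ≤ x₁) (h14 : x₁ ≤ c.pp.1)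
    (h21 : f.1.1 ≤ x₂) (h22 : x₂ ≤ f.2.1) (h23 : q.1 ≤ x₂) (h24 : x₂ ≤ c.pp.1)
    (h : yOn f x₁ < yOn (q, c.pp) x₁) : yOn f x₂ < yOn (q, c.pp) x₂ :=
  yOn_lt_keep (c.hE1 f hf) hq.2.1 (hq.disj' hf) h11 h12 h13 h14 h21 h22 h23 h24 h

lemma gt_keep {q : Pt} (hq : c.Pa q) {f : Pt × Pt} (hf : f ∈ c.E) {x₁ x₂ : ℝ}
    (h11 : f.1.1 ≤ x₁) (h12 : x₁ ≤ f.2.1) (h13 : q.1 ≤ x₁) (h14 : x₁ ≤ c.pp.1)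
    (h21 : f.1.1 ≤ x₂) (h22 : x₂ ≤ f.2.1) (h23 : q.1 ≤ x₂) (h24 : x₂ ≤ c.pp.1)
    (h : yOn (q, c.pp) x₁ < yOn f x₁) : yOn (q, c.pp) x₂ < yOn f x₂ :=
  yOn_lt_keep hq.2.1 (c.hE1 f hf) (hq.2.2.1 f hf) h13 h14 h11 h12 h23 h24 h21 h22 h

/-- transport of `Betw` along columns -/
lemma betw_keep {q q' : Pt} (hq : c.Pa q) (hq' : c.Pa q') {f : Pt × Pt} (hf : f ∈ c.E)
    {x₁ x₂ : ℝ}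
    (h11 : f.1.1 ≤ x₁) (h12 : x₁ ≤ f.2.1) (h13 : q.1 ≤ x₁) (h14 : x₁ ≤ c.pp.1)
    (h13' : q'.1 ≤ x₁)
    (h21 : f.1.1 ≤ x₂) (h22 : x₂ ≤ f.2.1) (h23 : q.1 ≤ x₂) (h24 : x₂ ≤ c.pp.1)
    (h23' : q'.1 ≤ x₂)
    (h : Betw (yOn (q, c.pp) x₁) (yOn f x₁) (yOn (q', c.pp) x₁)) :
    Betw (yOn (q, c.pp) x₂) (yOn f x₂) (yOn (q', c.pp) x₂) := by
  rcases h with ⟨h1, h2⟩ | ⟨h1, h2⟩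
  · exact Or.inl ⟨gt_keep hq hf h11 h12 h13 h14 h21 h22 h23 h24 h1,
      lt_keep hq' hf h11 h12 h13' h14 h21 h22 h23' h24 h2⟩
  · exact Or.inr ⟨gt_keep hq' hf h11 h12 h13' h14 h21 h22 h23' h24 h1,
      lt_keep hq hf h11 h12 h13 h14 h21 h22 h23 h24 h2⟩

/-- a partner segment does not pass through another point of `A` -/
lemma Yner {q r : Pt} (hq : c.Pa q) (hr : r ∈ c.A) (h1 : q.1 < r.1) (h2 : r.1 < c.pp.1) :
    yOn (q, c.pp) r.1 ≠ r.2 := by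
  intro h
  have hne1 : q ≠ c.pp := fun e => by rw [e] at h1; exact absurd (lt_trans h1 h2) (lt_irrefl _)
  have hne2 : c.pp ≠ r := fun e => by rw [e] at h2; exact absurd h2 (lt_irrefl _)
  have hne3 : q ≠ r := fun e => by rw [e] at h1; exact absurd h1 (lt_irrefl _)
  exact c.hcol q hq.1 c.pp c.hppA r hr hne1 hne2 hne3
    (collinear_of_yOn (ne_of_lt hq.2.1) h.symm)

lemma betw_shift {a y u v : ℝ} (h : Betw a y u) (hnv : ¬ Betw a y v) (hyv : y ≠ v) :
    Betw u y v := by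
  rcases h with ⟨h1, h2⟩ | ⟨h1, h2⟩
  · refine Or.inr ⟨?_, h2⟩
    by_contra hvy
    push_neg at hvy
    exact hnv (Or.inl ⟨h1, lt_of_le_of_ne hvy hyv⟩)
  · refine Or.inl ⟨h1, ?_⟩
    by_contra hvy
    push_neg at hvy
    exact hnv (Or.inr ⟨lt_of_le_of_ne hvy (Ne.symm hyv), h2⟩)

end Config

end
noncomputable section
open Finset

namespace Config

theorem core (c : Config) : ∀ n : ℕ, ∀ w : ℕ, w ≤ 4 → ∀ (xb : ℝ) (S : Finset Pt),
    (c.A.filter (fun a => a.1 < xb)).card ≤ n →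
    xb < c.pp.1 →
    (∀ a ∈ c.A, a.1 ≠ xb) →
    (∀ q ∈ S, c.Pa q) →
    (∀ q ∈ S, q.1 < xb) →
    c.CoGap S xb →
    (∑ q ∈ S, (w - c.cB xb q)) ≤ V w := by
  intro n
  induction n with
  | zero =>
    intro w hw xb S hcard hxp hxnc hSPa hSx hgap
    have hS : S = ∅ := by
      rw [Finset.eq_empty_iff_forall_notMem]
      intro q hq
      have : q ∈ c.A.filter (fun a => a.1 < xb) :=
        Finset.mem_filter.mpr ⟨(hSPa q hq).1, hSx q hq⟩
      have := Finset.card_pos.mpr ⟨q, this⟩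
      omega
    rw [hS]
    simp only [Finset.sum_empty]
    exact Nat.zero_le _
  | succ n IH =>
    intro w hw xb S hcard hxp hxnc hSPa hSx hgap
    by_cases hSne : S = ∅
    · rw [hSne]; simp only [Finset.sum_empty]; exact Nat.zero_le _
    obtain ⟨q₀, hq₀⟩ := Finset.nonempty_iff_ne_empty.mpr hSne
    match w, hw with
    | 0, _ => simp only [Nat.zero_sub]; simp; 
    | (w'+1), hw =>
    have hw' : w' ≤ 3 := by omega
    -- the rightmost point strictly left of xb
    obtain ⟨r, hrT, hrmax0⟩ := Finset.exists_max_image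
      (c.A.filter (fun a => a.1 < xb)) (fun a => a.1)
      ⟨q₀, Finset.mem_filter.mpr ⟨(hSPa q₀ hq₀).1, hSx q₀ hq₀⟩⟩
    obtain ⟨hrA, hrx⟩ := Finset.mem_filter.mp hrT
    have hrmax : ∀ a ∈ c.A, a.1 < xb → a.1 ≤ r.1 := fun a ha h =>
      hrmax0 a (Finset.mem_filter.mpr ⟨ha, h⟩)
    have hrp : r.1 < c.pp.1 := lt_trans hrx hxp
    -- the new sweep position xc, between r.1 and its predecessor column
    obtain ⟨xc, hxc1, hxc2, hxc3⟩ : ∃ x : ℝ, x < r.1 ∧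
        (∀ a ∈ c.A, a.1 < r.1 → a.1 < x) ∧ (∀ a ∈ c.A, a.1 ≠ x) := by
      by_cases hT' : (c.A.filter (fun a => a.1 < r.1)).Nonempty
      · obtain ⟨r', hr'T, hr'max⟩ := Finset.exists_max_image _ (fun a => a.1) hT'
        obtain ⟨hr'A, hr'x⟩ := Finset.mem_filter.mp hr'T
        refine ⟨(r'.1 + r.1) / 2, by linarith, ?_, ?_⟩
        · intro a ha hlt
          have := hr'max a (Finset.mem_filter.mpr ⟨ha, hlt⟩)
          linarith
        · intro a ha he
          have h1 : a.1 < r.1 := by rw [he]; linarith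
          have := hr'max a (Finset.mem_filter.mpr ⟨ha, h1⟩)
          linarith [he]
      · rw [Finset.not_nonempty_iff_eq_empty] at hT'
        refine ⟨r.1 - 1, by linarith, ?_, ?_⟩
        · intro a ha hlt
          exfalso
          have : a ∈ c.A.filter (fun a => a.1 < r.1) := Finset.mem_filter.mpr ⟨ha, hlt⟩
          rw [hT'] at this
          exact absurd this (Finset.notMem_empty a)
        · intro a ha he
          have hlt : a.1 < r.1 := by rw [he]; linarith
          have : a ∈ c.A.filter (fun a => a.1 < r.1) := Finset.mem_filter.mpr ⟨ha, hlt⟩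
          rw [hT'] at this
          exact absurd this (Finset.notMem_empty a)
    have hxcb : xc < xb := lt_trans hxc1 hrx
    have hxcp : xc < c.pp.1 := lt_trans hxcb hxp
    -- measure decreases
    have hcard' : (c.A.filter (fun a => a.1 < xc)).card ≤ n := by
      have hsub : c.A.filter (fun a => a.1 < xc) ⊆
          (c.A.filter (fun a => a.1 < xb)).erase r := by
        intro a ha
        obtain ⟨haA, hax⟩ := Finset.mem_filter.mp ha
        refine Finset.mem_erase.mpr ⟨?_, Finset.mem_filter.mpr ⟨haA, by linarith⟩⟩
        rintro rfl
        linarith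
      have h1 := Finset.card_le_card hsub
      have h2 := Finset.card_erase_of_mem hrT
      omega
    -- members of S other than r lie strictly left of r
    have hSlt' : ∀ q ∈ S, q ≠ r → q.1 < r.1 := by
      intro q hq hne
      have h1 : q.1 ≤ r.1 := hrmax q (hSPa q hq).1 (hSx q hq)
      rcases lt_or_eq_of_le h1 with h | h
      · exact h
      · exact absurd (c.hxinj q (hSPa q hq).1 r hrA h) hne
    -- separation at column r.1 is impossible for members of S
    have hsep : ∀ q ∈ S, ∀ q' ∈ S, ∀ f ∈ c.E, f.1.1 < r.1 → r.1 < f.2.1 →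
        ¬ Betw (yOn (q, c.pp) r.1) (yOn f r.1) (yOn (q', c.pp) r.1) := by
      intro q hq q' hq' f hf h1 h2 hB
      have hf2A := (c.hEA f hf).2
      have hf2 : xb < f.2.1 := by
        rcases lt_or_ge f.2.1 xb with h | h
        · linarith [hrmax f.2 hf2A h]
        · rcases eq_or_lt_of_le h with h | h
          · exact absurd h.symm (hxnc f.2 hf2A)
          · exact h
      have hq1 : q.1 ≤ r.1 := hrmax q (hSPa q hq).1 (hSx q hq)
      have hq'1 : q'.1 ≤ r.1 := hrmax q' (hSPa q' hq').1 (hSx q' hq')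
      refine hgap q hq q' hq' f hf (by linarith) hf2 ?_
      exact betw_keep (hSPa q hq) (hSPa q' hq') hf (le_of_lt h1) (le_of_lt h2) hq1
        (le_of_lt hrp) hq'1 (by linarith) (le_of_lt hf2) (by linarith [hSx q hq])
        (le_of_lt hxp) (by linarith [hSx q' hq']) hB
    -- blockers at column r.1 cross it strictly
    have hstrict : ∀ f ∈ c.E, f.1.1 ≤ r.1 → r.1 ≤ f.2.1 → ∀ y : ℝ,
        Betw r.2 (yOn f r.1) y → f.1.1 < r.1 ∧ r.1 < f.2.1 := by
      intro f hf h1 h2 y hB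
      constructor
      · rcases lt_or_eq_of_le h1 with h | h
        · exact h
        · exfalso
          have he : f.1 = r := c.hxinj f.1 (c.hEA f hf).1 r hrA h
          have : yOn f r.1 = r.2 := by
            rw [← h, yOn_left, he]
          rw [this] at hB
          exact not_betw_self₁ hB
      · rcases lt_or_eq_of_le h2 with h | h
        · exact h
        · exfalso
          have he : f.2 = r := c.hxinj f.2 (c.hEA f hf).2 r hrA h.symm
          have : yOn f r.1 = r.2 := by
            rw [h, yOn_right f (ne_of_lt (c.hE1 f hf)), he]
          rw [this] at hB
          exact not_betw_self₁ hB
    -- counting step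
    have hcB : ∀ q : Pt, c.cB xb q = c.cB xc q +
        (if c.good r ∧ c.pier q r then 1 else 0) := by
      intro q
      unfold Config.cB
      have hset : c.A.filter (fun r' => c.good r' ∧ c.pier q r' ∧ r'.1 < xb)
          = c.A.filter (fun r' => c.good r' ∧ c.pier q r' ∧ r'.1 < xc) ∪
            c.A.filter (fun r' => (c.good r' ∧ c.pier q r') ∧ r' = r) := by
        ext r'
        simp only [Finset.mem_filter, Finset.mem_union]
        constructor
        · rintro ⟨hA, hg, hp, hlt⟩
          rcases lt_or_eq_of_le (hrmax r' hA hlt) with h | h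
          · exact Or.inl ⟨hA, hg, hp, hxc2 r' hA h⟩
          · exact Or.inr ⟨hA, ⟨hg, hp⟩, c.hxinj r' hA r hrA h⟩
        · rintro (⟨hA, hg, hp, hlt⟩ | ⟨hA, ⟨hg, hp⟩, rfl⟩)
          · exact ⟨hA, hg, hp, by linarith⟩
          · exact ⟨hA, hg, hp, hrx⟩
      rw [hset, Finset.card_union_of_disjoint]
      · congr 1
        by_cases h : c.good r ∧ c.pier q r
        · rw [if_pos h]
          have : c.A.filter (fun r' => (c.good r' ∧ c.pier q r') ∧ r' = r) = {r} := by
            ext r'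
            simp only [Finset.mem_filter, Finset.mem_singleton]
            constructor
            · rintro ⟨_, _, rfl⟩; rfl
            · rintro rfl; exact ⟨hrA, h, rfl⟩
          rw [this, Finset.card_singleton]
        · rw [if_neg h]
          have : c.A.filter (fun r' => (c.good r' ∧ c.pier q r') ∧ r' = r) = ∅ := by
            ext r'
            simp only [Finset.mem_filter, Finset.notMem_empty, iff_false, not_and]
            rintro _ hgp rfl
            exact h hgp
          rw [this, Finset.card_empty]
      · rw [Finset.disjoint_left]
        rintro r' h1 h2
        obtain ⟨_, _, _, hlt⟩ := Finset.mem_filter.mp h1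
        obtain ⟨_, _, rfl⟩ := Finset.mem_filter.mp h2
        linarith
    -- CoGap propagation to xc
    have hgap' : ∀ S₂ : Finset Pt, S₂ ⊆ S → (∀ q ∈ S₂, q.1 < r.1) →
        (∀ f ∈ c.E, f.2.1 = r.1 → ∀ q ∈ S₂, ∀ q' ∈ S₂, f.1.1 < xc →
          ¬ Betw (yOn (q, c.pp) xc) (yOn f xc) (yOn (q', c.pp) xc)) →
        c.CoGap S₂ xc := by
      intro S₂ hsub hlt hexc q hq q' hq' f hf h1 h2 hB
      by_cases hf2r : f.2.1 = r.1
      · exact hexc f hf hf2r q hq q' hq' h1 hB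
      · have hf2A := (c.hEA f hf).2
        have hgt : r.1 < f.2.1 := by
          rcases lt_or_ge f.2.1 r.1 with h | h
          · linarith [hxc2 f.2 hf2A h]
          · exact lt_of_le_of_ne h (Ne.symm hf2r)
        have hgtb : xb < f.2.1 := by
          rcases lt_or_ge f.2.1 xb with h | h
          · linarith [hrmax f.2 hf2A h]
          · rcases eq_or_lt_of_le h with h | h
            · exact absurd h.symm (hxnc f.2 hf2A)
            · exact h
        have hq1 : q.1 ≤ xc := le_of_lt (hxc2 q (hSPa q (hsub hq)).1 (hlt q hq))
        have hq'1 : q'.1 ≤ xc := le_of_lt (hxc2 q' (hSPa q' (hsub hq')).1 (hlt q' hq'))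
        refine hgap q (hsub hq) q' (hsub hq') f hf (by linarith) hgtb ?_
        exact betw_keep (hSPa q (hsub hq)) (hSPa q' (hsub hq')) hf (le_of_lt h1)
          (le_of_lt h2) hq1 (le_of_lt hxcp) hq'1 (by linarith) (le_of_lt hgtb)
          (by linarith) (le_of_lt hxp) (by linarith) hB
    -- uniformity of piercing among cogapped partners
    have hunif : ∀ q ∈ S, q.1 < r.1 → ∀ q' ∈ S, q'.1 < r.1 → ¬ c.pier q r → ¬ c.pier q' r := by
      intro q hq hqlt q' hq' hq'lt hnp hp'
      unfold Config.pier at hnp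
      push_neg at hnp
      obtain ⟨f, hf, h1, h2, hB⟩ := hnp hqlt hrp
      have hnB' := hp'.2.2 f hf h1 h2
      have hstr := hstrict f hf h1 h2 _ hB
      have hne1 : yOn f r.1 ≠ yOn (q', c.pp) r.1 :=
        yne (hSPa q' hq') hf h1 h2 (le_of_lt hq'lt) (le_of_lt hrp)
      exact hsep q hq q' hq' f hf hstr.1 hstr.2 (betw_shift hB hnB' hne1)
    -- the common finishing move when no branching occurs
    have hfinish : c.CoGap S xc → (∀ q ∈ S, q.1 < r.1) →
        (∑ q ∈ S, ((w' + 1) - c.cB xb q)) ≤ V (w' + 1) := by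
      intro hgapS hSlt
      have hSxc : ∀ q ∈ S, q.1 < xc := fun q hq => hxc2 q (hSPa q hq).1 (hSlt q hq)
      by_cases hall : c.good r ∧ ∀ q ∈ S, c.pier q r
      · have hsum : ∑ q ∈ S, ((w' + 1) - c.cB xb q) = ∑ q ∈ S, (w' - c.cB xc q) := by
          refine Finset.sum_congr rfl (fun q hq => ?_)
          rw [hcB q, if_pos ⟨hall.1, hall.2 q hq⟩]
          omega
        rw [hsum]
        exact le_trans (IH w' (by omega) xc S hcard' hxcp hxc3 hSPa hSxc hgapS)
          (V_mono hw')
      · have hnone : ∀ q ∈ S, ¬ (c.good r ∧ c.pier q r) := by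
          intro q hq hgp
          apply hall
          refine ⟨hgp.1, fun q' hq' => ?_⟩
          by_contra hnp'
          exact hunif q' hq' (hSlt q' hq') q hq (hSlt q hq) hnp' hgp.2
        have hsum : ∑ q ∈ S, ((w' + 1) - c.cB xb q) =
            ∑ q ∈ S, ((w' + 1) - c.cB xc q) := by
          refine Finset.sum_congr rfl (fun q hq => ?_)
          rw [hcB q, if_neg (hnone q hq)]
          omega
        rw [hsum]
        exact IH (w' + 1) hw xc S hcard' hxcp hxc3 hSPa hSxc hgapS
    by_cases hre : ∃ f ∈ c.E, f.2 = r
    · -- r is a right endpoint : possible branching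
      obtain ⟨fs, hfs, hfs2⟩ := hre
      have hrS : r ∉ S := fun h => ((hSPa r h).2.2.2 fs hfs).2 hfs2
      have hSlt : ∀ q ∈ S, q.1 < r.1 := fun q hq =>
        hSlt' q hq (fun e => hrS (e ▸ hq))
      have hSxc : ∀ q ∈ S, q.1 < xc := fun q hq => hxc2 q (hSPa q hq).1 (hSlt q hq)
      have hfs21 : fs.2.1 = r.1 := by rw [hfs2]
      have hfs22 : fs.2.2 = r.2 := by rw [hfs2]
      have hfs1r : fs.1.1 < r.1 := by rw [← hfs21]; exact c.hE1 fs hfs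
      have hfs1xc : fs.1.1 < xc := hxc2 fs.1 (c.hEA fs hfs).1 hfs1r
      have hYfs : yOn fs r.1 = r.2 := by
        rw [← hfs21, yOn_right fs (ne_of_lt (c.hE1 fs hfs)), hfs22]
      have hgood : c.good r := Or.inr ⟨fs, hfs, hfs2⟩
      have hup : ∀ q ∈ S, yOn fs xc < yOn (q, c.pp) xc → r.2 < yOn (q, c.pp) r.1 := by
        intro q hq h
        have := lt_keep (hSPa q hq) hfs (le_of_lt hfs1xc)
          (by rw [hfs21]; exact le_of_lt hxc1) (le_of_lt (hSxc q hq)) (le_of_lt hxcp)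
          (le_of_lt hfs1r) (le_of_eq hfs21.symm) (le_of_lt (hSlt q hq)) (le_of_lt hrp) h
        rwa [hYfs] at this
      have hdn : ∀ q ∈ S, ¬ (yOn fs xc < yOn (q, c.pp) xc) →
          yOn (q, c.pp) r.1 < r.2 := by
        intro q hq h
        have hne : yOn fs xc ≠ yOn (q, c.pp) xc :=
          yne (hSPa q hq) hfs (le_of_lt hfs1xc) (by rw [hfs21]; exact le_of_lt hxc1)
            (le_of_lt (hSxc q hq)) (le_of_lt hxcp)
        have h' : yOn (q, c.pp) xc < yOn fs xc :=
          lt_of_le_of_ne (le_of_not_gt h) (Ne.symm hne)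
        have := gt_keep (hSPa q hq) hfs (le_of_lt hfs1xc)
          (by rw [hfs21]; exact le_of_lt hxc1) (le_of_lt (hSxc q hq)) (le_of_lt hxcp)
          (le_of_lt hfs1r) (le_of_eq hfs21.symm) (le_of_lt (hSlt q hq)) (le_of_lt hrp) h'
        rwa [hYfs] at this
      have hfeqfs : ∀ f ∈ c.E, f.2.1 = r.1 → f = fs := by
        intro f hf hf2r
        by_contra hne
        have hf2 : f.2 = r := c.hxinj f.2 (c.hEA f hf).2 r hrA hf2r
        exact (c.hshare f hf fs hfs hne).2.2.2 (by rw [hf2, hfs2])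
      by_cases hboth : (∃ q ∈ S, yOn fs xc < yOn (q, c.pp) xc) ∧
          (∃ q ∈ S, ¬ yOn fs xc < yOn (q, c.pp) xc)
      · -- genuine branching : everyone pays, split into two groups
        obtain ⟨⟨qu, hqu, hequ⟩, ⟨qd, hqd, heqd⟩⟩ := hboth
        have hpier : ∀ q ∈ S, c.pier q r := by
          intro q hq
          refine ⟨hSlt q hq, hrp, ?_⟩
          intro f hf h1 h2 hB
          have hstr := hstrict f hf h1 h2 _ hB
          by_cases hu : yOn fs xc < yOn (q, c.pp) xc
          · have hY : r.2 < yOn (q, c.pp) r.1 := hup q hq hu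
            have hY' : yOn (qd, c.pp) r.1 < r.2 := hdn qd hqd heqd
            rcases hB with ⟨hb1, hb2⟩ | ⟨hb1, hb2⟩
            · exact hsep q hq qd hqd f hf hstr.1 hstr.2 (Or.inr ⟨by linarith, hb2⟩)
            · linarith
          · have hY : yOn (q, c.pp) r.1 < r.2 := hdn q hq hu
            have hY' : r.2 < yOn (qu, c.pp) r.1 := hup qu hqu hequ
            rcases hB with ⟨hb1, hb2⟩ | ⟨hb1, hb2⟩
            · linarith
            · exact hsep q hq qu hqu f hf hstr.1 hstr.2 (Or.inl ⟨hb1, by linarith⟩)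
        have hsum : ∑ q ∈ S, ((w' + 1) - c.cB xb q) = ∑ q ∈ S, (w' - c.cB xc q) := by
          refine Finset.sum_congr rfl (fun q hq => ?_)
          rw [hcB q, if_pos ⟨hgood, hpier q hq⟩]
          omega
        rw [hsum, ← Finset.sum_filter_add_sum_filter_not S
          (fun q => yOn fs xc < yOn (q, c.pp) xc)]
        have hgapU : c.CoGap (S.filter (fun q => yOn fs xc < yOn (q, c.pp) xc)) xc := by
          refine hgap' _ (Finset.filter_subset _ _)
            (fun q hq => hSlt q (Finset.mem_filter.mp hq).1) ?_
          intro f hf hf2r q hq q' hq' h1 hB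
          rw [hfeqfs f hf hf2r] at hB
          have h2 := (Finset.mem_filter.mp hq).2
          have h3 := (Finset.mem_filter.mp hq').2
          rcases hB with ⟨hb1, hb2⟩ | ⟨hb1, hb2⟩ <;> linarith
        have hgapD : c.CoGap (S.filter (fun q => ¬ yOn fs xc < yOn (q, c.pp) xc)) xc := by
          refine hgap' _ (Finset.filter_subset _ _)
            (fun q hq => hSlt q (Finset.mem_filter.mp hq).1) ?_
          intro f hf hf2r q hq q' hq' h1 hB
          rw [hfeqfs f hf hf2r] at hB
          have h2 := (Finset.mem_filter.mp hq).2
          have h3 := (Finset.mem_filter.mp hq').2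
          simp only [not_lt] at h2 h3
          have hne : yOn fs xc ≠ yOn (q, c.pp) xc :=
            yne (hSPa q (Finset.filter_subset _ _ hq)) hfs (le_of_lt hfs1xc)
              (by rw [hfs21]; exact le_of_lt hxc1)
              (le_of_lt (hSxc q (Finset.filter_subset _ _ hq))) (le_of_lt hxcp)
          have hne' : yOn fs xc ≠ yOn (q', c.pp) xc :=
            yne (hSPa q' (Finset.filter_subset _ _ hq')) hfs (le_of_lt hfs1xc)
              (by rw [hfs21]; exact le_of_lt hxc1)
              (le_of_lt (hSxc q' (Finset.filter_subset _ _ hq'))) (le_of_lt hxcp)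
          rcases hB with ⟨hb1, hb2⟩ | ⟨hb1, hb2⟩ <;>
            rcases lt_or_eq_of_le h2 with h4 | h4 <;>
            rcases lt_or_eq_of_le h3 with h5 | h5 <;>
            first
              | linarith
              | exact hne h4.symm
              | exact hne' h5.symm
        have hIHu := IH w' (by omega) xc _ hcard' hxcp hxc3
          (fun q hq => hSPa q (Finset.filter_subset _ _ hq))
          (fun q hq => hSxc q (Finset.filter_subset _ _ hq)) hgapU
        have hIHd := IH w' (by omega) xc _ hcard' hxcp hxc3
          (fun q hq => hSPa q (Finset.filter_subset _ _ hq))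
          (fun q hq => hSxc q (Finset.filter_subset _ _ hq)) hgapD
        have hVd := V_double hw'
        omega
      · -- no branching : all partners on the same side of fs
        have hgapS : c.CoGap S xc := by
          refine hgap' S (Finset.Subset.refl S) hSlt ?_
          intro f hf hf2r q hq q' hq' h1 hB
          rw [hfeqfs f hf hf2r] at hB
          rcases not_and_or.mp hboth with h | h
          · push_neg at h
            have h2 := h q hq
            have h3 := h q' hq'
            have hne : yOn fs xc ≠ yOn (q, c.pp) xc :=
              yne (hSPa q hq) hfs (le_of_lt hfs1xc) (by rw [hfs21]; exact le_of_lt hxc1)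
                (le_of_lt (hSxc q hq)) (le_of_lt hxcp)
            have hne' : yOn fs xc ≠ yOn (q', c.pp) xc :=
              yne (hSPa q' hq') hfs (le_of_lt hfs1xc) (by rw [hfs21]; exact le_of_lt hxc1)
                (le_of_lt (hSxc q' hq')) (le_of_lt hxcp)
            rcases hB with ⟨hb1, hb2⟩ | ⟨hb1, hb2⟩ <;>
              rcases lt_or_eq_of_le h2 with h4 | h4 <;>
              rcases lt_or_eq_of_le h3 with h5 | h5 <;>
              first
                | linarith
                | exact hne h4.symm
                | exact hne' h5.symm
          · push_neg at h
            have h2 := h q hq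
            have h3 := h q' hq'
            rcases hB with ⟨hb1, hb2⟩ | ⟨hb1, hb2⟩ <;> linarith
        exact hfinish hgapS hSlt
    · by_cases hle : ∃ f ∈ c.E, f.1 = r
      · -- r is a left endpoint : free passage
        obtain ⟨fl, hfl, hfl1⟩ := hle
        push_neg at hre
        have hrS : r ∉ S := fun h => ((hSPa r h).2.2.2 fl hfl).1 hfl1
        have hSlt : ∀ q ∈ S, q.1 < r.1 := fun q hq =>
          hSlt' q hq (fun e => hrS (e ▸ hq))
        have hgapS : c.CoGap S xc := by
          refine hgap' S (Finset.Subset.refl S) hSlt ?_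
          intro f hf hf2r q hq q' hq' h1 hB
          exact absurd (c.hxinj f.2 (c.hEA f hf).2 r hrA hf2r) (hre f hf)
        exact hfinish hgapS hSlt
      · -- r is isolated
        push_neg at hre
        push_neg at hle
        have hgood : c.good r := Or.inl (fun f hf => ⟨hle f hf, hre f hf⟩)
        have hgapS2 : ∀ S₂, S₂ ⊆ S → (∀ q ∈ S₂, q.1 < r.1) → c.CoGap S₂ xc := by
          intro S₂ h1 h2
          refine hgap' S₂ h1 h2 ?_
          intro f hf hf2r
          exact absurd (c.hxinj f.2 (c.hEA f hf).2 r hrA hf2r) (hre f hf)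
        by_cases hrS : r ∈ S
        · -- r itself is a partner ; all other partners pierce its wall
          have hpier : ∀ q ∈ S.erase r, c.pier q r := by
            intro q hq
            obtain ⟨hqne, hqS⟩ := Finset.mem_erase.mp hq
            have hqlt := hSlt' q hqS hqne
            refine ⟨hqlt, hrp, ?_⟩
            intro f hf h1 h2 hB
            have hstr := hstrict f hf h1 h2 _ hB
            refine hsep r hrS q hqS f hf hstr.1 hstr.2 ?_
            have hYr : yOn (r, c.pp) r.1 = r.2 := yOn_left (r, c.pp)
            rw [hYr]
            exact hB
          rw [← Finset.sum_erase_add S _ hrS]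
          have hsum : ∑ q ∈ S.erase r, ((w' + 1) - c.cB xb q) =
              ∑ q ∈ S.erase r, (w' - c.cB xc q) := by
            refine Finset.sum_congr rfl (fun q hq => ?_)
            rw [hcB q, if_pos ⟨hgood, hpier q hq⟩]
            omega
          rw [hsum]
          have hElt : ∀ q ∈ S.erase r, q.1 < r.1 := fun q hq =>
            hSlt' q (Finset.mem_erase.mp hq).2 (Finset.mem_erase.mp hq).1
          have hIH := IH w' (by omega) xc (S.erase r) hcard' hxcp hxc3
            (fun q hq => hSPa q (Finset.mem_erase.mp hq).2)
            (fun q hq => hxc2 q (hSPa q (Finset.mem_erase.mp hq).2).1 (hElt q hq))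
            (hgapS2 (S.erase r) (Finset.erase_subset r S) hElt)
          have hVp := V_pay hw'
          have hterm : (w' + 1) - c.cB xb r ≤ w' + 1 := Nat.sub_le _ _
          omega
        · have hSlt : ∀ q ∈ S, q.1 < r.1 := fun q hq =>
            hSlt' q hq (fun e => hrS (e ▸ hq))
          exact hfinish (hgapS2 S (Finset.Subset.refl S) hSlt) hSlt

end Config
end
noncomputable section
open Finset

namespace Config

/-- total number of good pierced points -/
def cost (c : Config) (q : Pt) : ℕ :=
  (c.A.filter (fun r => c.good r ∧ c.pier q r)).card

theorem main (c : Config) (S : Finset Pt) (hS : ∀ q ∈ S, c.Pa q) :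
    ∑ q ∈ S, (4 - c.cost q) ≤ 12 := by
  by_cases hT : (c.A.filter (fun a => a.1 < c.pp.1)).Nonempty
  · obtain ⟨r, hrT, hrmax0⟩ := Finset.exists_max_image _ (fun a => a.1) hT
    obtain ⟨hrA, hrx⟩ := Finset.mem_filter.mp hrT
    have hrmax : ∀ a ∈ c.A, a.1 < c.pp.1 → a.1 ≤ r.1 := fun a ha h =>
      hrmax0 a (Finset.mem_filter.mpr ⟨ha, h⟩)
    set xb : ℝ := (r.1 + c.pp.1) / 2 with hxb
    have hxb1 : r.1 < xb := by rw [hxb]; linarith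
    have hxb2 : xb < c.pp.1 := by rw [hxb]; linarith
    have hxblt : ∀ a ∈ c.A, a.1 < c.pp.1 → a.1 < xb := fun a ha h =>
      lt_of_le_of_lt (hrmax a ha h) hxb1
    have hxbnc : ∀ a ∈ c.A, a.1 ≠ xb := by
      intro a ha he
      have : a.1 < c.pp.1 := by rw [he]; exact hxb2
      have := hxblt a ha this
      rw [he] at this
      exact absurd this (lt_irrefl _)
    have hgap : c.CoGap S xb := by
      intro q hq q' hq' f hf h1 h2 hB
      have hf2A := (c.hEA f hf).2
      have hf2 : c.pp.1 < f.2.1 := by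
        rcases lt_or_ge f.2.1 c.pp.1 with h | h
        · linarith [hxblt f.2 hf2A h]
        · rcases eq_or_lt_of_le h with h | h
          · exact absurd (c.hxinj f.2 hf2A c.pp c.hppA h.symm) (c.hppiso f hf).2
          · exact h
      have hq1 : q.1 < xb := hxblt q (hS q hq).1 (hS q hq).2.1
      have hq'1 : q'.1 < xb := hxblt q' (hS q' hq').1 (hS q' hq').2.1
      have hB' := betw_keep (hS q hq) (hS q' hq') hf (le_of_lt h1) (le_of_lt h2)
        (le_of_lt hq1) (le_of_lt hxb2) (le_of_lt hq'1) (by linarith) (le_of_lt hf2)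
        (le_of_lt (hS q hq).2.1) (le_refl _) (le_of_lt (hS q' hq').2.1) hB
      rw [yOn_right (q, c.pp) (ne_of_lt (hS q hq).2.1),
        yOn_right (q', c.pp) (ne_of_lt (hS q' hq').2.1)] at hB'
      exact not_betw_refl hB'
    have hfull : ∀ q ∈ S, c.cost q = c.cB xb q := by
      intro q hq
      unfold Config.cost Config.cB
      have hseteq : c.A.filter (fun r => c.good r ∧ c.pier q r) =
          c.A.filter (fun r => c.good r ∧ c.pier q r ∧ r.1 < xb) := by
        ext r'
        simp only [Finset.mem_filter]
        constructor
        · rintro ⟨hA, hg, hp⟩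
          exact ⟨hA, hg, hp, hxblt r' hA hp.2.1⟩
        · rintro ⟨hA, hg, hp, _⟩
          exact ⟨hA, hg, hp⟩
      rw [hseteq]
    have hsum : ∑ q ∈ S, (4 - c.cost q) = ∑ q ∈ S, (4 - c.cB xb q) :=
      Finset.sum_congr rfl (fun q hq => by rw [hfull q hq])
    rw [hsum]
    have := core c (c.A.filter (fun a => a.1 < xb)).card 4 (le_refl 4) xb S (le_refl _)
      hxb2 hxbnc hS (fun q hq => hxblt q (hS q hq).1 (hS q hq).2.1) hgap
    simpa [V] using this
  · have hSe : S = ∅ := by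
      rw [Finset.eq_empty_iff_forall_notMem]
      intro q hq
      exact hT ⟨q, Finset.mem_filter.mpr ⟨(hS q hq).1, (hS q hq).2.1⟩⟩
    rw [hSe]
    simp

end Config
end
noncomputable section
open Finset

/-- reflection about the y-axis -/
def rfl2 : Pt → Pt := fun z => (-z.1, z.2)

lemma rfl2_invol (z : Pt) : rfl2 (rfl2 z) = z := by
  simp [rfl2]

lemma rfl2_inj : Function.Injective rfl2 := by
  intro a b h
  have := congrArg rfl2 h
  rwa [rfl2_invol, rfl2_invol] at this

lemma rfl2_comb (t : ℝ) (u v : Pt) :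
    rfl2 ((1 - t) • u + t • v) = (1 - t) • rfl2 u + t • rfl2 v := by
  simp only [rfl2, Prod.smul_def, smul_eq_mul, Prod.mk_add_mk, Prod.mk.injEq]
  exact ⟨by ring, trivial⟩

lemma Seg_reflect_mem {a b z : Pt} (h : z ∈ Seg a b) : rfl2 z ∈ Seg (rfl2 a) (rfl2 b) := by
  rw [Seg, segment_eq_image] at h ⊢
  obtain ⟨t, ht, hz⟩ := h
  exact ⟨t, ht, by rw [← hz, rfl2_comb]⟩

lemma Seg_reflect_disj {a b u v : Pt} (h : Seg a b ∩ Seg u v = ∅) :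
    Seg (rfl2 a) (rfl2 b) ∩ Seg (rfl2 u) (rfl2 v) = ∅ := by
  rw [Set.eq_empty_iff_forall_notMem]
  rintro z ⟨h1, h2⟩
  have h1' := Seg_reflect_mem h1
  have h2' := Seg_reflect_mem h2
  simp only [rfl2_invol] at h1' h2'
  have : rfl2 z ∈ Seg a b ∩ Seg u v := ⟨h1', h2'⟩
  rw [h] at this
  exact this

lemma collinear_reflect {a b c : Pt} (h : Collinear ℝ ({a, b, c} : Set Pt)) :
    Collinear ℝ ({rfl2 a, rfl2 b, rfl2 c} : Set Pt) := by
  rw [collinear_iff_exists_forall_eq_smul_vadd] at h ⊢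
  obtain ⟨p₀, v, hv⟩ := h
  refine ⟨rfl2 p₀, ((-v.1, v.2) : Pt), ?_⟩
  intro p hp
  have key : ∀ w : Pt, w ∈ ({a, b, c} : Set Pt) → ∃ t : ℝ,
      rfl2 w = t • ((-v.1, v.2) : Pt) +ᵥ rfl2 p₀ := by
    intro w hw
    obtain ⟨t, hw'⟩ := hv w hw
    refine ⟨t, ?_⟩
    rw [hw']
    show rfl2 (t • v +ᵥ p₀) = t • ((-v.1, v.2) : Pt) +ᵥ rfl2 p₀
    simp only [rfl2, Prod.smul_def, smul_eq_mul]
    rw [Prod.ext_iff]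
    constructor
    · show -(t * v.1 + p₀.1) = t * (-v.1) + -p₀.1
      ring
    · rfl
  simp only [Set.mem_insert_iff, Set.mem_singleton_iff] at hp
  rcases hp with rfl | rfl | rfl
  · exact key a (by simp)
  · exact key b (by simp)
  · exact key c (by simp)

lemma yOn_reflect {a b : Pt} (hab : a.1 ≠ b.1) (x : ℝ) :
    yOn (rfl2 b, rfl2 a) (-x) = yOn (a, b) x := by
  have h1 : b.1 - a.1 ≠ 0 := sub_ne_zero.mpr (Ne.symm hab)
  have key : -a.1 - -b.1 = b.1 - a.1 := by ring
  simp only [yOn, rfl2]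
  rw [key]
  field_simp
  ring

end
noncomputable section
open Finset

lemma genpos_xinj {P : Finset Pt} (hP : GenPos P) :
    ∀ a ∈ P, ∀ b ∈ P, a.1 = b.1 → a = b := by
  intro a ha b hb he
  by_contra hne
  exact hP.2 a ha b hb hne he

lemma y_ne_pt {P : Finset Pt} (hP : GenPos P) {a b r : Pt} (ha : a ∈ P) (hb : b ∈ P)
    (hr : r ∈ P) (h1 : a.1 < r.1) (h2 : r.1 < b.1) : yOn (a, b) r.1 ≠ r.2 := by
  intro h
  have hab : a.1 ≠ b.1 := ne_of_lt (lt_trans h1 h2)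
  have hne1 : a ≠ b := fun e => hab (by rw [e])
  have hne2 : b ≠ r := fun e => by rw [e] at h2; exact lt_irrefl _ h2
  have hne3 : a ≠ r := fun e => by rw [e] at h1; exact lt_irrefl _ h1
  exact hP.1 a ha b hb r hr hne1 hne2 hne3 (collinear_of_yOn hab h.symm)

/-- the configuration for charging left partners of `p` -/
def mkCfgL (P : Finset Pt) (M : Finset (Pt × Pt)) (p : Pt) (hP : GenPos P)
    (hM : IsMatching P M) (hp : p ∈ P) (hiso : Isolated M p) : Config where
  A := P
  E := M
  pp := p
  hE1 := hM.x_lt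
  hEA := fun e he => ⟨hM.left_mem e he, hM.right_mem e he⟩
  hppA := hp
  hxinj := genpos_xinj hP
  hcol := hP.1
  hshare := hM.no_shared
  hppiso := hiso

def rEdge (e : Pt × Pt) : Pt × Pt := (rfl2 e.2, rfl2 e.1)

/-- the configuration for charging right partners of `p` (reflected picture) -/
def mkCfgR (P : Finset Pt) (M : Finset (Pt × Pt)) (p : Pt) (hP : GenPos P)
    (hM : IsMatching P M) (hp : p ∈ P) (hiso : Isolated M p) : Config where
  A := P.image rfl2
  E := M.image rEdge
  pp := rfl2 p
  hE1 := by
    intro e he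
    obtain ⟨f, hf, rfl⟩ := Finset.mem_image.mp he
    have := hM.x_lt f hf
    show -f.2.1 < -f.1.1
    linarith
  hEA := by
    intro e he
    obtain ⟨f, hf, rfl⟩ := Finset.mem_image.mp he
    exact ⟨Finset.mem_image_of_mem _ (hM.right_mem f hf),
      Finset.mem_image_of_mem _ (hM.left_mem f hf)⟩
  hppA := Finset.mem_image_of_mem _ hp
  hxinj := by
    intro a ha b hb he
    obtain ⟨a₀, ha₀, rfl⟩ := Finset.mem_image.mp ha
    obtain ⟨b₀, hb₀, rfl⟩ := Finset.mem_image.mp hb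
    have h0 : -a₀.1 = -b₀.1 := he
    have : a₀.1 = b₀.1 := by linarith
    rw [genpos_xinj hP a₀ ha₀ b₀ hb₀ this]
  hcol := by
    intro a ha b hb c hc hab hbc hac hcl
    obtain ⟨a₀, ha₀, rfl⟩ := Finset.mem_image.mp ha
    obtain ⟨b₀, hb₀, rfl⟩ := Finset.mem_image.mp hb
    obtain ⟨c₀, hc₀, rfl⟩ := Finset.mem_image.mp hc
    have h := collinear_reflect hcl
    simp only [rfl2_invol] at h
    exact hP.1 a₀ ha₀ b₀ hb₀ c₀ hc₀ (fun e => hab (by rw [e])) (fun e => hbc (by rw [e]))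
      (fun e => hac (by rw [e])) h
  hshare := by
    intro e he f hf hne
    obtain ⟨e₀, he₀, rfl⟩ := Finset.mem_image.mp he
    obtain ⟨f₀, hf₀, rfl⟩ := Finset.mem_image.mp hf
    have hne₀ : e₀ ≠ f₀ := fun h => hne (by rw [h])
    obtain ⟨h1, h2, h3, h4⟩ := hM.no_shared e₀ he₀ f₀ hf₀ hne₀
    exact ⟨fun h => h4 (rfl2_inj h), fun h => h3 (rfl2_inj h),
      fun h => h2 (rfl2_inj h), fun h => h1 (rfl2_inj h)⟩
  hppiso := by
    intro e he
    obtain ⟨e₀, he₀, rfl⟩ := Finset.mem_image.mp he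
    exact ⟨fun h => (hiso e₀ he₀).2 (rfl2_inj h), fun h => (hiso e₀ he₀).1 (rfl2_inj h)⟩

lemma rank_ge_left {P : Finset Pt} {M : Finset (Pt × Pt)} {p : Pt} (hP : GenPos P)
    (hM : IsMatching P M) (hp : p ∈ P) (hiso : Isolated M p) {q : Pt} (hq : q ∈ P)
    (hqx : q.1 < p.1) :
    (mkCfgL P M p hP hM hp hiso).cost q ≤ rank P (insert (q, p) M) p := by
  have hqne : q ≠ p := fun e => by rw [e] at hqx; exact lt_irrefl _ hqx
  have hne1 : ¬ ∃ e ∈ insert (q, p) M, e.1 = p := by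
    rintro ⟨e, he, he1⟩
    rcases Finset.mem_insert.mp he with rfl | heM
    · exact hqne he1
    · exact (hiso e heM).1 he1
  have hex : ∃ e ∈ insert (q, p) M, e.2 = p := ⟨(q, p), Finset.mem_insert_self _ _, rfl⟩
  rw [rank, dif_neg hne1, dif_pos hex]
  have hch : hex.choose = (q, p) := by
    obtain ⟨hc1, hc2⟩ := hex.choose_spec
    rcases Finset.mem_insert.mp hc1 with h | h
    · exact h
    · exact absurd hc2 (hiso _ h).2
  rw [hch]
  apply Finset.card_le_card
  intro r hr
  obtain ⟨hrP, hgood, hpier⟩ := Finset.mem_filter.mp hr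
  have hq1r : q.1 < r.1 := hpier.1
  have hrp1 : r.1 < p.1 := hpier.2.1
  have hrq : r ≠ q := fun e => by rw [e] at hq1r; exact lt_irrefl _ hq1r
  have hrp : r ≠ p := fun e => by rw [e] at hrp1; exact lt_irrefl _ hrp1
  have hyne : yOn (q, p) r.1 ≠ r.2 := y_ne_pt hP hq hp hrP hq1r hrp1
  refine Finset.mem_filter.mpr ⟨hrP, ?_, ?_⟩
  · rcases hgood with h | ⟨f, hf, hf2⟩
    · left
      intro e he
      rcases Finset.mem_insert.mp he with rfl | heM
      · exact ⟨Ne.symm hrq, Ne.symm hrp⟩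
      · exact h e heM
    · exact Or.inr ⟨f, Finset.mem_insert_of_mem hf, hf2⟩
  · refine ⟨hq1r, hrp1, ?_, ?_⟩
    · intro f hf
      rw [Set.eq_empty_iff_forall_notMem]
      rintro z ⟨hz1, hz2⟩
      have hz' := (mem_openSegment_vert (Ne.symm hyne)).mp hz1
      rcases Finset.mem_insert.mp hf with rfl | hfM
      · have hy := seg_y_eq hqx hz2
        rw [hz'.1] at hy
        rw [hy] at hz'
        exact not_betw_self₂ hz'.2
      · obtain ⟨hfx1, hfx2, hfy⟩ := (mem_Seg_iff (hM.x_lt f hfM)).mp hz2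
        rw [hz'.1] at hfx1 hfx2 hfy
        exact hpier.2.2 f hfM hfx1 hfx2 (hfy ▸ hz'.2)
    · intro r' hr' hmem
      have hz' := (mem_openSegment_vert (Ne.symm hyne)).mp hmem
      have he : r' = r := genpos_xinj hP r' hr' r hrP hz'.1
      rw [he] at hz'
      exact not_betw_self₁ hz'.2

lemma rank_ge_right {P : Finset Pt} {M : Finset (Pt × Pt)} {p : Pt} (hP : GenPos P)
    (hM : IsMatching P M) (hp : p ∈ P) (hiso : Isolated M p) {q : Pt} (hq : q ∈ P)
    (hqx : p.1 < q.1) :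
    (mkCfgR P M p hP hM hp hiso).cost (rfl2 q) ≤ rank P (insert (p, q) M) p := by
  -- rewrite the reflected cost as a count over P
  have hcost : (mkCfgR P M p hP hM hp hiso).cost (rfl2 q) =
      (P.filter (fun r =>
        ((∀ f ∈ M, f.1 ≠ r ∧ f.2 ≠ r) ∨ ∃ f ∈ M, f.1 = r) ∧
        (r.1 < q.1 ∧ p.1 < r.1 ∧ ∀ f ∈ M, f.1.1 ≤ r.1 → r.1 ≤ f.2.1 →
          ¬ Betw r.2 (yOn f r.1) (yOn (p, q) r.1)))).card := by
    have hgood_iff : ∀ r : Pt, (mkCfgR P M p hP hM hp hiso).good (rfl2 r) ↔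
        ((∀ f ∈ M, f.1 ≠ r ∧ f.2 ≠ r) ∨ ∃ f ∈ M, f.1 = r) := by
      intro r
      unfold Config.good
      constructor
      · rintro (h | ⟨f', hf', hf2⟩)
        · left
          intro f hf
          have h1 := h (rEdge f) (Finset.mem_image_of_mem _ hf)
          exact ⟨fun e => h1.2 (congrArg rfl2 e), fun e => h1.1 (congrArg rfl2 e)⟩
        · obtain ⟨f, hf, rfl⟩ := Finset.mem_image.mp hf'
          exact Or.inr ⟨f, hf, rfl2_inj hf2⟩
      · rintro (h | ⟨f, hf, hf1⟩)
        · left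
          intro f' hf'
          obtain ⟨f, hf, rfl⟩ := Finset.mem_image.mp hf'
          exact ⟨fun e => (h f hf).2 (rfl2_inj e), fun e => (h f hf).1 (rfl2_inj e)⟩
        · exact Or.inr ⟨rEdge f, Finset.mem_image_of_mem _ hf, congrArg rfl2 hf1⟩
    have hpier_iff : ∀ r : Pt, (mkCfgR P M p hP hM hp hiso).pier (rfl2 q) (rfl2 r) ↔
        (r.1 < q.1 ∧ p.1 < r.1 ∧ ∀ f ∈ M, f.1.1 ≤ r.1 → r.1 ≤ f.2.1 →
          ¬ Betw r.2 (yOn f r.1) (yOn (p, q) r.1)) := by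
      intro r
      unfold Config.pier
      have hyq : yOn (rfl2 q, rfl2 p) (-r.1) = yOn (p, q) r.1 :=
        yOn_reflect (ne_of_lt hqx) r.1
      constructor
      · rintro ⟨h1, h2, h3⟩
        have h1' : -q.1 < -r.1 := h1
        have h2' : -r.1 < -p.1 := h2
        refine ⟨by linarith, by linarith, ?_⟩
        intro f hf hf1 hf2 hB
        have hyf : yOn (rEdge f) (-r.1) = yOn f r.1 :=
          yOn_reflect (ne_of_lt (hM.x_lt f hf)) r.1
        have h4 := h3 (rEdge f) (Finset.mem_image_of_mem _ hf)
          (show -f.2.1 ≤ -r.1 by linarith) (show -r.1 ≤ -f.1.1 by linarith)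
        apply h4
        show Betw r.2 (yOn (rEdge f) (-r.1)) (yOn (rfl2 q, rfl2 p) (-r.1))
        rw [hyf, hyq]
        exact hB
      · rintro ⟨h1, h2, h3⟩
        refine ⟨show -q.1 < -r.1 by linarith, show -r.1 < -p.1 by linarith, ?_⟩
        intro f' hf' hf1 hf2 hB
        obtain ⟨f, hf, rfl⟩ := Finset.mem_image.mp hf'
        have hyf : yOn (rEdge f) (-r.1) = yOn f r.1 :=
          yOn_reflect (ne_of_lt (hM.x_lt f hf)) r.1
        have hg1 : (rEdge f).1.1 = -f.2.1 := rfl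
        have hg2 : (rEdge f).2.1 = -f.1.1 := rfl
        have hr1 : (rfl2 r).1 = -r.1 := rfl
        rw [hg1, hr1] at hf1
        rw [hg2, hr1] at hf2
        have hB' : Betw r.2 (yOn f r.1) (yOn (p, q) r.1) := by
          rw [← hyf, ← hyq]
          exact hB
        exact h3 f hf (by linarith [hf2]) (by linarith [hf1]) hB'
    unfold Config.cost
    have hAimg : (mkCfgR P M p hP hM hp hiso).A = P.image rfl2 := rfl
    rw [hAimg]
    have hset : (P.image rfl2).filter (fun r' => (mkCfgR P M p hP hM hp hiso).good r' ∧
          (mkCfgR P M p hP hM hp hiso).pier (rfl2 q) r') =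
        (P.filter (fun r => (mkCfgR P M p hP hM hp hiso).good (rfl2 r) ∧
          (mkCfgR P M p hP hM hp hiso).pier (rfl2 q) (rfl2 r))).image rfl2 := by
      ext z
      simp only [Finset.mem_filter, Finset.mem_image]
      constructor
      · rintro ⟨⟨r, hr, rfl⟩, hQ⟩
        exact ⟨r, ⟨hr, hQ⟩, rfl⟩
      · rintro ⟨r, ⟨hr, hQ⟩, rfl⟩
        exact ⟨⟨r, hr, rfl⟩, hQ⟩
    rw [hset, Finset.card_image_of_injective _ rfl2_inj]
    congr 1
    apply Finset.filter_congr
    intro r hr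
    rw [hgood_iff r, hpier_iff r]
  rw [hcost]
  have hqne : q ≠ p := fun e => by rw [e] at hqx; exact lt_irrefl _ hqx
  have hex : ∃ e ∈ insert (p, q) M, e.1 = p := ⟨(p, q), Finset.mem_insert_self _ _, rfl⟩
  rw [rank, dif_pos hex]
  have hch : hex.choose = (p, q) := by
    obtain ⟨hc1, hc2⟩ := hex.choose_spec
    rcases Finset.mem_insert.mp hc1 with h | h
    · exact h
    · exact absurd hc2 (hiso _ h).1
  rw [hch]
  apply Finset.card_le_card
  intro r hr
  obtain ⟨hrP, hgood, hpier⟩ := Finset.mem_filter.mp hr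
  have hq1r : r.1 < q.1 := hpier.1
  have hrp1 : p.1 < r.1 := hpier.2.1
  have hrq : r ≠ q := fun e => by rw [e] at hq1r; exact lt_irrefl _ hq1r
  have hrp : r ≠ p := fun e => by rw [e] at hrp1; exact lt_irrefl _ hrp1
  have hyne : yOn (p, q) r.1 ≠ r.2 := y_ne_pt hP hp hq hrP hrp1 hq1r
  refine Finset.mem_filter.mpr ⟨hrP, ?_, ?_⟩
  · rcases hgood with h | ⟨f, hf, hf2⟩
    · left
      intro e he
      rcases Finset.mem_insert.mp he with rfl | heM
      · exact ⟨Ne.symm hrp, Ne.symm hrq⟩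
      · exact h e heM
    · exact Or.inr ⟨f, Finset.mem_insert_of_mem hf, hf2⟩
  · refine ⟨hrp1, hq1r, ?_, ?_⟩
    · intro f hf
      rw [Set.eq_empty_iff_forall_notMem]
      rintro z ⟨hz1, hz2⟩
      have hz' := (mem_openSegment_vert (Ne.symm hyne)).mp hz1
      rcases Finset.mem_insert.mp hf with rfl | hfM
      · have hy := seg_y_eq hqx hz2
        rw [hz'.1] at hy
        rw [hy] at hz'
        exact not_betw_self₂ hz'.2
      · obtain ⟨hfx1, hfx2, hfy⟩ := (mem_Seg_iff (hM.x_lt f hfM)).mp hz2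
        rw [hz'.1] at hfx1 hfx2 hfy
        exact hpier.2.2 f hfM hfx1 hfx2 (hfy ▸ hz'.2)
    · intro r' hr' hmem
      have hz' := (mem_openSegment_vert (Ne.symm hyne)).mp hmem
      have he : r' = r := genpos_xinj hP r' hr' r hrP hz'.1
      rw [he] at hz'
      exact not_betw_self₁ hz'.2

end
noncomputable section
open Finset

lemma key_sum (d : ℕ) :
    (∑ i ∈ Finset.range 5, (4 - i) * (if d = i then 1 else 0)) = 4 - d := by
  by_cases h : d < 5
  · rw [Finset.sum_eq_single d]
    · simp
    · intro i _ hne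
      simp [Ne.symm hne]
    · intro h'
      exact absurd (Finset.mem_range.mpr h) h'
  · push_neg at h
    rw [Finset.sum_eq_zero, eq_comm]
    · omega
    · intro i hi
      have hne : d ≠ i := by have := Finset.mem_range.mp hi; omega
      simp [hne]

lemma pair_bound {P : Finset Pt} {M : Finset (Pt × Pt)} {p : Pt} (hP : GenPos P)
    (hM : IsMatching P M) (hp : p ∈ P) (hiso : Isolated M p) :
    (∑ i ∈ Finset.range 5, (4 - i) * hcount P M p i) ≤ 24 := by
  classical
  set F := P.filter (fun q => IsMatching P (addEdge M q p)) with hF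
  have hid : (∑ i ∈ Finset.range 5, (4 - i) * hcount P M p i)
      = ∑ q ∈ F, (4 - rank P (addEdge M q p) p) := by
    unfold hcount
    calc ∑ i ∈ Finset.range 5, (4 - i) *
          (P.filter (fun q => IsMatching P (addEdge M q p) ∧
            rank P (addEdge M q p) p = i)).card
        = ∑ i ∈ Finset.range 5, ∑ q ∈ F,
            (4 - i) * (if rank P (addEdge M q p) p = i then 1 else 0) := by
          refine Finset.sum_congr rfl (fun i _ => ?_)
          rw [← Finset.filter_filter, Finset.card_filter, Finset.mul_sum]
      _ = ∑ q ∈ F, ∑ i ∈ Finset.range 5,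
            (4 - i) * (if rank P (addEdge M q p) p = i then 1 else 0) :=
          Finset.sum_comm
      _ = ∑ q ∈ F, (4 - rank P (addEdge M q p) p) :=
          Finset.sum_congr rfl (fun q _ => key_sum _)
  rw [hid, ← Finset.sum_filter_add_sum_filter_not F (fun q => q.1 < p.1)]
  -- basic facts about valid partners
  have hvalid : ∀ q ∈ F, q ∈ P ∧ IsMatching P (addEdge M q p) := by
    intro q hq
    obtain ⟨h1, h2⟩ := Finset.mem_filter.mp hq
    exact ⟨h1, h2⟩
  -- left part
  have hleft : (∑ q ∈ F.filter (fun q => q.1 < p.1),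
      (4 - rank P (addEdge M q p) p)) ≤ 12 := by
    set FL := F.filter (fun q => q.1 < p.1) with hFL
    have hmem : ∀ q ∈ FL, q ∈ P ∧ q.1 < p.1 ∧ IsMatching P (insert (q, p) M) := by
      intro q hq
      obtain ⟨hqF, hqx⟩ := Finset.mem_filter.mp hq
      obtain ⟨hqP, hins⟩ := hvalid q hqF
      refine ⟨hqP, hqx, ?_⟩
      rwa [addEdge, if_pos hqx] at hins
    have hPa : ∀ q ∈ FL, (mkCfgL P M p hP hM hp hiso).Pa q := by
      intro q hq
      obtain ⟨hqP, hqx, hins⟩ := hmem q hq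
      have hqpM : (q, p) ∉ M := fun h => (hiso _ h).2 rfl
      refine ⟨hqP, hqx, ?_, ?_⟩
      · intro f hf
        exact hins.no_cross (q, p) (Finset.mem_insert_self _ _) f
          (Finset.mem_insert_of_mem hf) (fun h => hqpM (h ▸ hf))
      · intro f hf
        obtain ⟨h1, h2, _, _⟩ := hins.no_shared (q, p) (Finset.mem_insert_self _ _) f
          (Finset.mem_insert_of_mem hf) (fun h => hqpM (h ▸ hf))
        exact ⟨Ne.symm h1, Ne.symm h2⟩
    calc (∑ q ∈ FL, (4 - rank P (addEdge M q p) p))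
        ≤ ∑ q ∈ FL, (4 - (mkCfgL P M p hP hM hp hiso).cost q) := by
          refine Finset.sum_le_sum (fun q hq => ?_)
          obtain ⟨hqP, hqx, hins⟩ := hmem q hq
          have h1 := rank_ge_left hP hM hp hiso hqP hqx
          rw [addEdge, if_pos hqx]
          omega
      _ ≤ 12 := Config.main _ FL hPa
  -- right part
  have hright : (∑ q ∈ F.filter (fun q => ¬ q.1 < p.1),
      (4 - rank P (addEdge M q p) p)) ≤ 12 := by
    set FR := F.filter (fun q => ¬ q.1 < p.1) with hFR
    have hmem : ∀ q ∈ FR, q ∈ P ∧ p.1 < q.1 ∧ IsMatching P (insert (p, q) M) := by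
      intro q hq
      obtain ⟨hqF, hqx⟩ := Finset.mem_filter.mp hq
      obtain ⟨hqP, hins⟩ := hvalid q hqF
      rw [addEdge, if_neg hqx] at hins
      have hqnep : q ≠ p := by
        rintro rfl
        exact absurd (hins.x_lt (q, q) (Finset.mem_insert_self _ _)) (lt_irrefl _)
      have hx : p.1 < q.1 := by
        rcases lt_trichotomy q.1 p.1 with h | h | h
        · exact absurd h hqx
        · exact absurd (genpos_xinj hP q hqP p hp h) hqnep
        · exact h
      exact ⟨hqP, hx, hins⟩
    have hPa : ∀ q' ∈ FR.image rfl2, (mkCfgR P M p hP hM hp hiso).Pa q' := by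
      intro q' hq'
      obtain ⟨q, hq, rfl⟩ := Finset.mem_image.mp hq'
      obtain ⟨hqP, hqx, hins⟩ := hmem q hq
      have hpqM : (p, q) ∉ M := fun h => (hiso _ h).1 rfl
      refine ⟨Finset.mem_image_of_mem _ hqP, show -q.1 < -p.1 by linarith, ?_, ?_⟩
      · intro f' hf'
        obtain ⟨f, hf, rfl⟩ := Finset.mem_image.mp hf'
        have hd := hins.no_cross (p, q) (Finset.mem_insert_self _ _) f
          (Finset.mem_insert_of_mem hf) (fun h => hpqM (h ▸ hf))
        have hd' := Seg_reflect_disj hd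
        have hc : Seg (rfl2 q) ((mkCfgR P M p hP hM hp hiso).pp) = Seg (rfl2 p) (rfl2 q) := by
          show Seg (rfl2 q) (rfl2 p) = Seg (rfl2 p) (rfl2 q)
          rw [Seg, Seg, segment_symm]
        rw [hc]
        have hc2 : Seg (rEdge f).1 (rEdge f).2 = Seg (rfl2 f.1) (rfl2 f.2) := by
          show Seg (rfl2 f.2) (rfl2 f.1) = Seg (rfl2 f.1) (rfl2 f.2)
          rw [Seg, Seg, segment_symm]
        rw [hc2]
        exact hd'
      · intro f' hf'
        obtain ⟨f, hf, rfl⟩ := Finset.mem_image.mp hf'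
        obtain ⟨_, _, h3, h4⟩ := hins.no_shared (p, q) (Finset.mem_insert_self _ _) f
          (Finset.mem_insert_of_mem hf) (fun h => hpqM (h ▸ hf))
        exact ⟨fun h => h4 (rfl2_inj h).symm, fun h => h3 (rfl2_inj h).symm⟩
    calc (∑ q ∈ FR, (4 - rank P (addEdge M q p) p))
        ≤ ∑ q ∈ FR, (4 - (mkCfgR P M p hP hM hp hiso).cost (rfl2 q)) := by
          refine Finset.sum_le_sum (fun q hq => ?_)
          obtain ⟨hqP, hqx, hins⟩ := hmem q hq
          have h1 := rank_ge_right hP hM hp hiso hqP hqx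
          have hqx' : ¬ q.1 < p.1 := (Finset.mem_filter.mp hq).2
          rw [addEdge, if_neg hqx']
          omega
      _ = ∑ q' ∈ FR.image rfl2, (4 - (mkCfgR P M p hP hM hp hiso).cost q') := by
          rw [Finset.sum_image (fun a _ b _ h => rfl2_inj h)]
      _ ≤ 12 := Config.main _ _ hPa
  omega

end
noncomputable section
open Finset

lemma iso_card {P : Finset Pt} {M : Finset (Pt × Pt)} (hM : IsMatching P M) :
    (P.filter (fun p => Isolated M p)).card + 2 * M.card = P.card := by
  classical
  set V := M.image Prod.fst ∪ M.image Prod.snd with hV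
  have hVP : V ⊆ P := by
    intro x hx
    rcases Finset.mem_union.mp hx with h | h
    · obtain ⟨e, he, rfl⟩ := Finset.mem_image.mp h
      exact hM.left_mem e he
    · obtain ⟨e, he, rfl⟩ := Finset.mem_image.mp h
      exact hM.right_mem e he
  have hfil : P.filter (fun p => Isolated M p) = P \ V := by
    ext p
    simp only [Finset.mem_filter, Finset.mem_sdiff, hV, Finset.mem_union, Finset.mem_image]
    constructor
    · rintro ⟨hp, hiso⟩
      refine ⟨hp, ?_⟩
      rintro (⟨e, he, h⟩ | ⟨e, he, h⟩)
      · exact (hiso e he).1 h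
      · exact (hiso e he).2 h
    · rintro ⟨hp, hnv⟩
      refine ⟨hp, fun e he => ⟨?_, ?_⟩⟩
      · intro h
        exact hnv (Or.inl ⟨e, he, h⟩)
      · intro h
        exact hnv (Or.inr ⟨e, he, h⟩)
  have hinj1 : (M.image Prod.fst).card = M.card := by
    apply Finset.card_image_of_injOn
    intro e he f hf h
    by_contra hne
    exact (hM.no_shared e he f hf hne).1 h
  have hinj2 : (M.image Prod.snd).card = M.card := by
    apply Finset.card_image_of_injOn
    intro e he f hf h
    by_contra hne
    exact (hM.no_shared e he f hf hne).2.2.2 h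
  have hdisj : Disjoint (M.image Prod.fst) (M.image Prod.snd) := by
    rw [Finset.disjoint_left]
    rintro x h1 h2
    obtain ⟨e, he, he1⟩ := Finset.mem_image.mp h1
    obtain ⟨f, hf, hf2⟩ := Finset.mem_image.mp h2
    by_cases hef : e = f
    · subst hef
      have hx := hM.x_lt e he
      have : e.1 = e.2 := by rw [he1, hf2]
      rw [this] at hx
      exact lt_irrefl _ hx
    · exact (hM.no_shared e he f hf hef).2.1 (by rw [he1, hf2])
  have hVcard : V.card = 2 * M.card := by
    rw [hV, Finset.card_union_of_disjoint hdisj, hinj1, hinj2]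
    ring
  rw [hfil, Finset.card_sdiff_of_subset hVP, hVcard]
  have := Finset.card_le_card hVP
  rw [hVcard] at this
  omega

theorem Ssum_four_le' (P : Finset Pt) (hP : GenPos P) (m : ℕ) (hm : 1 ≤ m) :
    (Ssum P 4 m : ℤ) ≤ 24 * (((P.card : ℤ) - 2 * m) + 2) * Ma P (m - 1) := by
  classical
  have hinner : ∀ M ∈ Matchings P (m - 1),
      ((∑ p ∈ P.filter (fun p => Isolated M p),
        ∑ i ∈ Finset.range 5, (4 - i) * hcount P M p i : ℕ) : ℤ)
        ≤ 24 * (((P.card : ℤ) - 2 * m) + 2) := by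
    intro M hMm
    obtain ⟨hpow, hmatch, hcard⟩ := Finset.mem_filter.mp hMm
    have hIC := iso_card hmatch
    have hsum : (∑ p ∈ P.filter (fun p => Isolated M p),
        ∑ i ∈ Finset.range 5, (4 - i) * hcount P M p i)
        ≤ 24 * (P.filter (fun p => Isolated M p)).card := by
      calc (∑ p ∈ P.filter (fun p => Isolated M p),
            ∑ i ∈ Finset.range 5, (4 - i) * hcount P M p i)
          ≤ ∑ _p ∈ P.filter (fun p => Isolated M p), 24 := by
            refine Finset.sum_le_sum (fun p hp => ?_)
            obtain ⟨hpP, hpiso⟩ := Finset.mem_filter.mp hp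
            exact pair_bound hP hmatch hpP hpiso
        _ = 24 * (P.filter (fun p => Isolated M p)).card := by
            rw [Finset.sum_const, smul_eq_mul, mul_comm]
    have h2 : ((P.filter (fun p => Isolated M p)).card : ℤ) =
        ((P.card : ℤ) - 2 * m) + 2 := by
      rw [hcard] at hIC
      have hcast := congrArg (Nat.cast : ℕ → ℤ) hIC
      push_cast at hcast
      have hm1 : ((m - 1 : ℕ) : ℤ) = (m : ℤ) - 1 := by omega
      rw [hm1] at hcast
      linarith
    calc ((∑ p ∈ P.filter (fun p => Isolated M p),
          ∑ i ∈ Finset.range 5, (4 - i) * hcount P M p i : ℕ) : ℤ)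
        ≤ ((24 * (P.filter (fun p => Isolated M p)).card : ℕ) : ℤ) := by
          exact_mod_cast hsum
      _ = 24 * (((P.card : ℤ) - 2 * m) + 2) := by
          push_cast
          rw [h2]
  unfold Ssum
  push_cast
  calc (∑ M ∈ Matchings P (m - 1), ∑ p ∈ P.filter (fun p => Isolated M p),
        ∑ i ∈ Finset.range (4 + 1), ((4 - i : ℕ) : ℤ) * (hcount P M p i : ℤ))
      ≤ ∑ _M ∈ Matchings P (m - 1), 24 * (((P.card : ℤ) - 2 * m) + 2) := by
        refine Finset.sum_le_sum (fun M hM => ?_)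
        have := hinner M hM
        push_cast at this
        exact this
    _ = 24 * (((P.card : ℤ) - 2 * m) + 2) * (Ma P (m - 1) : ℤ) := by
        rw [Finset.sum_const, nsmul_eq_mul]
        unfold Ma
        ring

end

/-- For every integer `m ≥ 1`, writing `s = n − 2m`,
one has `S_4(m) ≤ 24·(s + 2)·Ma_{m−1}(P)`. -/
theorem Ssum_four_le (P : Finset Pt) (hP : GenPos P) (m : ℕ) (hm : 1 ≤ m) :
    (Ssum P 4 m : ℤ) ≤ 24 * (((P.card : ℤ) - 2 * m) + 2) * Ma P (m - 1) := by
  exact Ssum_four_le' P hP m hm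
end
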